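/- arXiv:0903.1283 — 5 statements merged into one kernel-verified Lean document; each statement's English description precedes it below -/
import Mathlib

section
/- Let S = [[A, B], [Bᵀ, D]] be a symmetric positive definite real block matrix with A of size m×m and D of size q×q (both m, q ≥ 1). Then Tr(S⁻¹) ≥ Tr(D⁻¹). -/
open Matrix

noncomputable section

/-- Variational lower bound: for positive definite `S`,
`x ⬝ᵥ S⁻¹ x ≥ 2 x⬝y - y ⬝ᵥ S y`. -/
lemma key_var_ineq {n : Type*} [Fintype n] [DecidableEq n] {S : Matrix n n ℝ}
    (hS : S.PosDef) (x y : n → ℝ) :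
    2 * (x ⬝ᵥ y) - y ⬝ᵥ S *ᵥ y ≤ x ⬝ᵥ S⁻¹ *ᵥ x := by
  have hMS : S⁻¹ * S = 1 := Matrix.nonsing_inv_mul S hS.det_pos.ne'.isUnit
  have hSM : S * S⁻¹ = 1 := Matrix.mul_nonsing_inv S hS.det_pos.ne'.isUnit
  have hsym : Sᵀ = S := hS.isHermitian.eq
  set z := x - S *ᵥ y with hz
  have h0 : 0 ≤ z ⬝ᵥ (S⁻¹ *ᵥ z) := by
    simpa using hS.inv.posSemidef.dotProduct_mulVec_nonneg z
  have hz2 : S⁻¹ *ᵥ z = S⁻¹ *ᵥ x - y := by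
    rw [hz, Matrix.mulVec_sub, Matrix.mulVec_mulVec, hMS, Matrix.one_mulVec]
  rw [hz2, hz] at h0
  rw [sub_dotProduct, dotProduct_sub, dotProduct_sub] at h0
  have hSy : S *ᵥ y = y ᵥ* S := by
    conv_lhs => rw [← hsym]
    exact Matrix.mulVec_transpose S y
  have e1 : (S *ᵥ y) ⬝ᵥ (S⁻¹ *ᵥ x) = y ⬝ᵥ x := by
    rw [hSy, ← Matrix.dotProduct_mulVec, Matrix.mulVec_mulVec, hSM, Matrix.one_mulVec]
  have e2 : (S *ᵥ y) ⬝ᵥ y = y ⬝ᵥ (S *ᵥ y) := by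
    conv_lhs => rw [hSy, ← Matrix.dotProduct_mulVec]
  have e3 : x ⬝ᵥ y = y ⬝ᵥ x := dotProduct_comm x y
  nlinarith [h0]

/-- For a symmetric positive definite block matrix `S = [[A, B], [Bᵀ, D]]`,
`Tr(S⁻¹) ≥ Tr(D⁻¹)`. -/
theorem trace_inv_fromBlocks_ge_trace_inv_block
    {m q : ℕ} (hm : 1 ≤ m) (hq : 1 ≤ q)
    (A : Matrix (Fin m) (Fin m) ℝ) (B : Matrix (Fin m) (Fin q) ℝ)
    (D : Matrix (Fin q) (Fin q) ℝ)
    (hS : (fromBlocks A B Bᵀ D).PosDef) :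
    D⁻¹.trace ≤ (fromBlocks A B Bᵀ D)⁻¹.trace := by
  set S := fromBlocks A B Bᵀ D with hSdef
  -- D is positive definite
  have hDsym : D.IsHermitian := by
    ext i j
    simpa [hSdef, Matrix.conjTranspose, fromBlocks] using
      congrFun (congrFun hS.isHermitian.eq (Sum.inr i)) (Sum.inr j)
  have hD : D.PosDef := by
    refine Matrix.PosDef.of_dotProduct_mulVec_pos hDsym fun x hx => ?_
    have hv : (Sum.elim (0 : Fin m → ℝ) x) ≠ 0 := by
      obtain ⟨i, hi⟩ := Function.ne_iff.mp hx
      intro h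
      exact hi (by simpa using congrFun h (Sum.inr i))
    have := hS.dotProduct_mulVec_pos hv
    simpa [hSdef, Matrix.fromBlocks_mulVec, sumElim_dotProduct_sumElim] using this
  have hDD : D * D⁻¹ = 1 := Matrix.mul_nonsing_inv D hD.det_pos.ne'.isUnit
  -- pointwise bounds on diagonal entries of S⁻¹
  have hinl : ∀ a : Fin m, 0 ≤ S⁻¹ (Sum.inl a) (Sum.inl a) := by
    intro a
    have h := key_var_ineq hS (Pi.single (Sum.inl a) 1) 0
    simpa [Matrix.mulVec_single, single_dotProduct] using h
  have hinr : ∀ b : Fin q, D⁻¹ b b ≤ S⁻¹ (Sum.inr b) (Sum.inr b) := by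
    intro b
    set w : Fin q → ℝ := D⁻¹ *ᵥ Pi.single b 1 with hw
    have h := key_var_ineq hS (Pi.single (Sum.inr b) 1) (Sum.elim 0 w)
    have hx : S⁻¹ (Sum.inr b) (Sum.inr b)
        = Pi.single (Sum.inr b) (1:ℝ) ⬝ᵥ S⁻¹ *ᵥ Pi.single (Sum.inr b) 1 := by
      simp [Matrix.mulVec_single, single_dotProduct]
    have hwb : w b = D⁻¹ b b := by
      simp [hw, Matrix.mulVec_single]
    have hxy : Pi.single (Sum.inr b : Fin m ⊕ Fin q) (1:ℝ) ⬝ᵥ Sum.elim 0 w = D⁻¹ b b := by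
      simp [single_dotProduct, hwb]
    have hDw : D *ᵥ w = Pi.single b 1 := by
      rw [hw, Matrix.mulVec_mulVec, hDD, Matrix.one_mulVec]
    have hySy : Sum.elim (0 : Fin m → ℝ) w ⬝ᵥ S *ᵥ Sum.elim 0 w = D⁻¹ b b := by
      simp [hSdef, Matrix.fromBlocks_mulVec, sumElim_dotProduct_sumElim,
        hDw, dotProduct_single, hwb]
    rw [hx]
    rw [hxy, hySy] at h
    linarith
  -- assemble the trace inequality
  rw [Matrix.trace, Matrix.trace]
  rw [show ∑ i, S⁻¹.diag i = ∑ a, S⁻¹ (Sum.inl a) (Sum.inl a)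
      + ∑ b, S⁻¹ (Sum.inr b) (Sum.inr b) from Fintype.sum_sum_type _]
  have h1 : 0 ≤ ∑ a, S⁻¹ (Sum.inl a) (Sum.inl a) :=
    Finset.sum_nonneg fun a _ => hinl a
  have h2 : ∑ b, D⁻¹.diag b ≤ ∑ b, S⁻¹ (Sum.inr b) (Sum.inr b) :=
    Finset.sum_le_sum fun b _ => hinr b
  linarith
end
end

section
/- Let S = [[A, B], [Bᵀ, D]] be a symmetric positive definite real block matrix with A of size m×m and D of size q×q (both m, q ≥ 1). Then Tr(S⁻²) ≥ Tr(D⁻²). -/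
open Matrix

noncomputable section

namespace TraceInvSqAux

variable {n : Type*} [Fintype n] [DecidableEq n]

lemma symm_apply {M : Matrix n n ℝ} (h : M.IsHermitian) (i j : n) : M j i = M i j := by
  have := congrFun (congrFun h i) j
  simpa [conjTranspose_apply] using this

lemma transpose_eq {M : Matrix n n ℝ} (h : M.IsHermitian) : Mᵀ = M := by
  simpa [conjTranspose_eq_transpose_of_trivial] using h.eq

/-- Cauchy–Schwarz for a PSD quadratic form over ℝ. -/
lemma cs {M : Matrix n n ℝ} (hM : M.PosSemidef) (a b : n → ℝ) :
    (a ⬝ᵥ M *ᵥ b) ^ 2 ≤ (a ⬝ᵥ M *ᵥ a) * (b ⬝ᵥ M *ᵥ b) := by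
  have hsym : ∀ u v : n → ℝ, u ⬝ᵥ M *ᵥ v = v ⬝ᵥ M *ᵥ u := by
    intro u v
    rw [dotProduct_mulVec, ← mulVec_transpose, transpose_eq hM.1, dotProduct_comm]
  have key : ∀ t : ℝ, 0 ≤ (b ⬝ᵥ M *ᵥ b) * (t * t) + (2 * (a ⬝ᵥ M *ᵥ b)) * t
      + (a ⬝ᵥ M *ᵥ a) := by
    intro t
    have h0 := hM.dotProduct_mulVec_nonneg (a + t • b)
    rw [star_trivial] at h0
    have hexp : (a + t • b) ⬝ᵥ M *ᵥ (a + t • b)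
        = (b ⬝ᵥ M *ᵥ b) * (t * t) + (2 * (a ⬝ᵥ M *ᵥ b)) * t + (a ⬝ᵥ M *ᵥ a) := by
      rw [mulVec_add, dotProduct_add, add_dotProduct, add_dotProduct,
        mulVec_smul, dotProduct_smul, smul_dotProduct, smul_dotProduct,
        dotProduct_smul, hsym b a]
      simp only [smul_eq_mul]
      ring
    rw [hexp] at h0
    exact h0
  have hd := discrim_le_zero key
  rw [discrim] at hd
  nlinarith [hd]

lemma diag_nonneg {M : Matrix n n ℝ} (hM : M.PosSemidef) (i : n) : 0 ≤ M i i := by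
  have := hM.dotProduct_mulVec_nonneg (Pi.single i 1)
  simpa [mulVec_single, dotProduct_single] using this

lemma trace_nonneg' {M : Matrix n n ℝ} (hM : M.PosSemidef) : 0 ≤ M.trace :=
  Finset.sum_nonneg fun i _ => diag_nonneg hM i

lemma trace_mul_nonneg {P Q : Matrix n n ℝ} (hP : P.PosSemidef) (hQ : Q.PosSemidef) :
    0 ≤ (P * Q).trace := by
  obtain ⟨L, rfl⟩ : ∃ L : Matrix n n ℝ, P = Lᴴ * L := by
    open scoped MatrixOrder in
    exact CStarAlgebra.nonneg_iff_eq_star_mul_self.mp hP.nonneg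
  rw [Matrix.mul_assoc, trace_mul_comm]
  exact trace_nonneg' (hQ.mul_mul_conjTranspose_same L)

/-- If `N ⪯ M` in Loewner order with both PSD, then `Tr(N²) ≤ Tr(M²)`. -/
lemma trace_sq_mono {M N : Matrix n n ℝ} (hM : M.PosSemidef) (hN : N.PosSemidef)
    (hle : ∀ v : n → ℝ, v ⬝ᵥ N *ᵥ v ≤ v ⬝ᵥ M *ᵥ v) :
    (N * N).trace ≤ (M * M).trace := by
  have hdiff : (M - N).PosSemidef := by
    refine PosSemidef.of_dotProduct_mulVec_nonneg (hM.1.sub hN.1) fun x => ?_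
    rw [star_trivial, sub_mulVec, dotProduct_sub]
    linarith [hle x]
  have hsum : (M + N).PosSemidef := hM.add hN
  have h0 : 0 ≤ ((M - N) * (M + N)).trace := trace_mul_nonneg hdiff hsum
  have hexp : ((M - N) * (M + N)).trace
      = (M * M).trace - (N * N).trace + ((M * N).trace - (N * M).trace) := by
    rw [sub_mul, mul_add, mul_add, trace_sub, trace_add, trace_add]
    ring
  rw [trace_mul_comm M N] at hexp
  rw [hexp] at h0
  linarith

lemma trace_mul_self_symm {M : Matrix n n ℝ} (h : M.IsHermitian) :
    (M * M).trace = ∑ i, ∑ j, (M i j) ^ 2 := by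
  rw [trace]
  refine Finset.sum_congr rfl fun i _ => ?_
  rw [diag_apply, mul_apply]
  refine Finset.sum_congr rfl fun j _ => ?_
  rw [symm_apply h i j, sq]

end TraceInvSqAux

open TraceInvSqAux in
/-- For a symmetric positive definite block matrix `S = [[A, B], [Bᵀ, D]]`,
`Tr(S⁻²) ≥ Tr(D⁻²)`. -/
theorem trace_inv_sq_fromBlocks_ge_trace_inv_sq_block
    {m q : ℕ} (hm : 1 ≤ m) (hq : 1 ≤ q)
    (A : Matrix (Fin m) (Fin m) ℝ) (B : Matrix (Fin m) (Fin q) ℝ)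
    (D : Matrix (Fin q) (Fin q) ℝ)
    (hS : (fromBlocks A B Bᵀ D).PosDef) :
    (D⁻¹ * D⁻¹).trace ≤ ((fromBlocks A B Bᵀ D)⁻¹ * (fromBlocks A B Bᵀ D)⁻¹).trace := by
  set S : Matrix (Fin m ⊕ Fin q) (Fin m ⊕ Fin q) ℝ := fromBlocks A B Bᵀ D with hSdef
  have hSinv : S⁻¹.PosDef := hS.inv
  have hSS : S * S⁻¹ = 1 := Matrix.mul_nonsing_inv S (isUnit_iff_isUnit_det S |>.mp hS.isUnit)
  -- D is positive definite
  have hD : D.PosDef := by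
    refine PosDef.of_dotProduct_mulVec_pos ?_ ?_
    · funext i j
      rw [conjTranspose_apply, star_trivial]
      have := congrFun (congrFun hS.1 (Sum.inr i)) (Sum.inr j)
      simpa [hSdef, conjTranspose_apply, fromBlocks] using this
    · intro x hx
      have hxe : (Sum.elim 0 x : Fin m ⊕ Fin q → ℝ) ≠ 0 := by
        intro h
        apply hx
        funext i
        simpa using congrFun h (Sum.inr i)
      have := hS.dotProduct_mulVec_pos hxe
      simpa [hSdef, fromBlocks_mulVec, sumElim_dotProduct_sumElim] using this
  have hDinv : D⁻¹.PosDef := hD.inv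
  have hDD : D * D⁻¹ = 1 := Matrix.mul_nonsing_inv D (isUnit_iff_isUnit_det D |>.mp hD.isUnit)
  -- R : bottom-right block of S⁻¹
  set R : Matrix (Fin q) (Fin q) ℝ := S⁻¹.toBlocks₂₂ with hRdef
  have hRapp : ∀ i j, R i j = S⁻¹ (Sum.inr i) (Sum.inr j) := fun i j => rfl
  have hRherm : R.IsHermitian := by
    funext i j
    rw [conjTranspose_apply, star_trivial, hRapp, hRapp]
    exact symm_apply hSinv.1 _ _
  -- quadratic form of R via S⁻¹
  have hRform : ∀ v : Fin q → ℝ, v ⬝ᵥ R *ᵥ v = (Sum.elim 0 v) ⬝ᵥ S⁻¹ *ᵥ (Sum.elim 0 v) := by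
    intro v
    conv_rhs => rw [← fromBlocks_toBlocks S⁻¹]
    rw [fromBlocks_mulVec, sumElim_dotProduct_sumElim]
    simp [hRdef]
  have hRpsd : R.PosSemidef := by
    refine PosSemidef.of_dotProduct_mulVec_nonneg hRherm fun v => ?_
    rw [star_trivial, hRform]
    have := hSinv.posSemidef.dotProduct_mulVec_nonneg (Sum.elim 0 v)
    rwa [star_trivial] at this
  -- the key Loewner inequality : D⁻¹ ⪯ R
  have hkey : ∀ v : Fin q → ℝ, v ⬝ᵥ D⁻¹ *ᵥ v ≤ v ⬝ᵥ R *ᵥ v := by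
    intro v
    set u : Fin m ⊕ Fin q → ℝ := Sum.elim 0 v with hu
    set w : Fin m ⊕ Fin q → ℝ := Sum.elim 0 (D⁻¹ *ᵥ v) with hw
    -- w ⬝ᵥ S *ᵥ w = v ⬝ᵥ D⁻¹ *ᵥ v
    have h1 : w ⬝ᵥ S *ᵥ w = v ⬝ᵥ D⁻¹ *ᵥ v := by
      rw [hw, hSdef, fromBlocks_mulVec, sumElim_dotProduct_sumElim]
      simp only [Sum.elim_comp_inl, Sum.elim_comp_inr, mulVec_zero, zero_add,
        dotProduct_zero, zero_dotProduct, zero_add]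
      rw [mulVec_mulVec, hDD, one_mulVec, dotProduct_mulVec, ← mulVec_transpose,
        transpose_eq hDinv.1, dotProduct_comm]
    -- u ⬝ᵥ w = v ⬝ᵥ D⁻¹ *ᵥ v
    have h2 : u ⬝ᵥ w = v ⬝ᵥ D⁻¹ *ᵥ v := by
      rw [hu, hw, sumElim_dotProduct_sumElim, dotProduct_zero, zero_add]
    -- (S⁻¹ *ᵥ a) ⬝ᵥ S *ᵥ b = a ⬝ᵥ b
    have hTS : ∀ a b : Fin m ⊕ Fin q → ℝ, (S⁻¹ *ᵥ a) ⬝ᵥ S *ᵥ b = a ⬝ᵥ b := by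
      intro a b
      rw [dotProduct_mulVec, ← mulVec_transpose, transpose_eq hS.1, mulVec_mulVec, hSS,
        one_mulVec]
    have hcs := cs hS.posSemidef (S⁻¹ *ᵥ u) w
    rw [hTS u w, h1, h2] at hcs
    have h3 : (S⁻¹ *ᵥ u) ⬝ᵥ S *ᵥ (S⁻¹ *ᵥ u) = u ⬝ᵥ S⁻¹ *ᵥ u := hTS u (S⁻¹ *ᵥ u)
    rw [h3, ← hRform] at hcs
    have hd0 : 0 ≤ v ⬝ᵥ D⁻¹ *ᵥ v := by
      have := hDinv.posSemidef.dotProduct_mulVec_nonneg v; rwa [star_trivial] at this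
    have hr0 : 0 ≤ v ⬝ᵥ R *ᵥ v := by
      have := hRpsd.dotProduct_mulVec_nonneg v; rwa [star_trivial] at this
    nlinarith [hcs, hd0, hr0]
  -- assemble
  have step1 : (D⁻¹ * D⁻¹).trace ≤ (R * R).trace :=
    trace_sq_mono hRpsd hDinv.posSemidef hkey
  have step2 : (R * R).trace ≤ (S⁻¹ * S⁻¹).trace := by
    rw [trace_mul_self_symm hRherm, trace_mul_self_symm hSinv.1]
    rw [Fintype.sum_sum_type]
    have hsplit : ∀ p : Fin m ⊕ Fin q,
        ∑ r : Fin m ⊕ Fin q, (S⁻¹ p r) ^ 2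
          = ∑ j : Fin m, (S⁻¹ p (Sum.inl j)) ^ 2 + ∑ j : Fin q, (S⁻¹ p (Sum.inr j)) ^ 2 :=
      fun p => Fintype.sum_sum_type _
    calc ∑ i, ∑ j, (R i j) ^ 2
        ≤ ∑ i : Fin q, ∑ r : Fin m ⊕ Fin q, (S⁻¹ (Sum.inr i) r) ^ 2 := by
          refine Finset.sum_le_sum fun i _ => ?_
          rw [hsplit]
          exact le_add_of_nonneg_left (by positivity)
      _ ≤ _ := by
          refine le_add_of_nonneg_left ?_
          positivity
  exact step1.trans step2
end
end

section
/- Fix a partition of the index set {1,…,p} into three pairwise disjoint subsets a, s, b with a and b nonempty, and set C₁ = a ∪ s, C₂ = s ∪ b. Let T be a symmetric positive definite real p×p matrix. Then the matrix L = [T_{C₁}⁻¹]⁰ + [T_{C₂}⁻¹]⁰ − [T_s⁻¹]⁰ is symmetric positive definite, and L_{ij} = 0 whenever i ∈ a, j ∈ b or i ∈ b, j ∈ a. -/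
open Matrix

noncomputable section

/-- Principal submatrix of `T` on `c × c`. -/
def subm {p : ℕ} (T : Matrix (Fin p) (Fin p) ℝ) (c : Finset (Fin p)) :
    Matrix c c ℝ :=
  T.submatrix (fun i => (i : Fin p)) fun j => (j : Fin p)

/-- Zero fill-in operator: the `p × p` matrix equal to `M` on the block `c × c`
and zero elsewhere. -/
def fill0 {p : ℕ} (c : Finset (Fin p)) (M : Matrix c c ℝ) :
    Matrix (Fin p) (Fin p) ℝ :=
  Matrix.of fun i j =>
    if hi : i ∈ c then if hj : j ∈ c then M ⟨i, hi⟩ ⟨j, hj⟩ else 0 else 0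

/-- Extension of a vector on `c` by zero to `Fin p`. -/
def ext0 {p : ℕ} (c : Finset (Fin p)) (y : c → ℝ) : Fin p → ℝ :=
  fun i => if h : i ∈ c then y ⟨i, h⟩ else 0

/-- Restriction of a vector to `c`. -/
def restr {p : ℕ} (x : Fin p → ℝ) (c : Finset (Fin p)) : c → ℝ :=
  fun i => x i

lemma dot_ext0 {p : ℕ} (c : Finset (Fin p)) (y : c → ℝ) (x : Fin p → ℝ) :
    ext0 c y ⬝ᵥ x = y ⬝ᵥ restr x c := by
  classical
  rw [dotProduct, dotProduct]
  rw [Finset.univ_eq_attach]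
  rw [← Finset.sum_subset (Finset.subset_univ c)
    (fun i _ hi => by simp [ext0, hi])]
  rw [← Finset.sum_attach c (fun i => ext0 c y i * x i)]
  refine Finset.sum_congr rfl fun i _ => ?_
  simp [ext0, restr, i.2]

lemma fill0_mulVec {p : ℕ} (c : Finset (Fin p)) (M : Matrix c c ℝ) (x : Fin p → ℝ) :
    fill0 c M *ᵥ x = ext0 c (M *ᵥ restr x c) := by
  funext i
  by_cases hi : i ∈ c
  · have hrow : (fill0 c M) i = ext0 c (M ⟨i, hi⟩) := by
      funext j; simp [fill0, ext0, hi]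
    rw [mulVec, hrow, dot_ext0]
    simp [ext0, hi, mulVec]
  · simp [mulVec, dotProduct, fill0, ext0, hi]

lemma quad_fill0 {p : ℕ} (c : Finset (Fin p)) (M : Matrix c c ℝ) (x : Fin p → ℝ) :
    x ⬝ᵥ fill0 c M *ᵥ x = restr x c ⬝ᵥ M *ᵥ restr x c := by
  rw [fill0_mulVec, dotProduct_comm, dot_ext0, dotProduct_comm]

lemma restr_mulVec_ext0 {p : ℕ} (T : Matrix (Fin p) (Fin p) ℝ) (c : Finset (Fin p))
    (y : c → ℝ) : restr (T *ᵥ ext0 c y) c = subm T c *ᵥ y := by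
  funext i
  show (T *ᵥ ext0 c y) ↑i = _
  rw [mulVec, dotProduct_comm, dot_ext0, dotProduct_comm]
  rfl

lemma quad_ext0 {p : ℕ} (T : Matrix (Fin p) (Fin p) ℝ) (c : Finset (Fin p))
    (y : c → ℝ) : ext0 c y ⬝ᵥ T *ᵥ ext0 c y = y ⬝ᵥ subm T c *ᵥ y := by
  rw [dot_ext0, restr_mulVec_ext0]

lemma ext0_restr_ext0 {p : ℕ} {c C : Finset (Fin p)} (hcC : c ⊆ C) (z : c → ℝ) :
    ext0 C (restr (ext0 c z) C) = ext0 c z := by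
  funext i
  by_cases hi : i ∈ C
  · simp [ext0, restr, hi]
  · have : i ∉ c := fun h => hi (hcC h)
    simp [ext0, hi, this]

lemma subm_posDef {p : ℕ} {T : Matrix (Fin p) (Fin p) ℝ} (hT : T.PosDef)
    (c : Finset (Fin p)) : (subm T c).PosDef := by
  refine posDef_iff_dotProduct_mulVec.mpr ⟨hT.1.submatrix _, fun y hy => ?_⟩
  have hne : ext0 c y ≠ 0 := by
    intro h
    apply hy
    funext j
    have := congrFun h (j : Fin p)
    simpa [ext0, j.2] using this
  have := hT.dotProduct_mulVec_pos hne
  simpa [quad_ext0] using this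

lemma fill0_isHermitian {p : ℕ} {c : Finset (Fin p)} {M : Matrix c c ℝ}
    (hM : M.IsHermitian) : (fill0 c M).IsHermitian := by
  refine Matrix.IsHermitian.ext fun i j => ?_
  by_cases hi : i ∈ c <;> by_cases hj : j ∈ c <;>
    simp [fill0, hi, hj]
  simpa using hM.apply ⟨i, hi⟩ ⟨j, hj⟩

lemma variational {n : Type*} [Fintype n] [DecidableEq n] {N : Matrix n n ℝ}
    (hN : N.PosDef) (y z : n → ℝ) :
    2 * (z ⬝ᵥ y) - z ⬝ᵥ N *ᵥ z ≤ y ⬝ᵥ N⁻¹ *ᵥ y := by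
  have hinv : N * N⁻¹ = 1 := mul_nonsing_inv _ hN.det_pos.ne'.isUnit
  set u := N⁻¹ *ᵥ y with hu_def
  have hu : N *ᵥ u = y := by
    rw [hu_def, mulVec_mulVec, hinv, one_mulVec]
  have h0 : 0 ≤ (z - u) ⬝ᵥ N *ᵥ (z - u) := by
    have := hN.posSemidef.dotProduct_mulVec_nonneg (z - u)
    simpa using this
  have e1 : N *ᵥ (z - u) = N *ᵥ z - y := by rw [mulVec_sub, hu]
  rw [e1, sub_dotProduct, dotProduct_sub, dotProduct_sub] at h0
  have ht : Nᵀ = N := by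
    ext i j
    simpa using hN.1.apply i j
  have e3 : u ⬝ᵥ N *ᵥ z = y ⬝ᵥ z := by
    rw [dotProduct_mulVec, ← mulVec_transpose, ht, hu]
  have e4 : u ⬝ᵥ y = y ⬝ᵥ u := dotProduct_comm _ _
  have e5 : y ⬝ᵥ z = z ⬝ᵥ y := dotProduct_comm _ _
  rw [e3, e4, e5] at h0
  linarith [h0]

/-- In the two-clique decomposable model with cliques `C₁ = a ∪ s`, `C₂ = s ∪ b`,
the matrix `L = [T_{C₁}⁻¹]⁰ + [T_{C₂}⁻¹]⁰ − [T_s⁻¹]⁰` is symmetric positive definite and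
has zero entries on the blocks `a × b` and `b × a`. -/
theorem mle_posDef_and_markov
    {p : ℕ} (a s b : Finset (Fin p))
    (hab : Disjoint a b) (has : Disjoint a s) (hsb : Disjoint s b)
    (hcover : a ∪ s ∪ b = Finset.univ)
    (ha : a.Nonempty) (hb : b.Nonempty)
    (T : Matrix (Fin p) (Fin p) ℝ) (hT : T.PosDef) :
    (fill0 (a ∪ s) (subm T (a ∪ s))⁻¹ + fill0 (s ∪ b) (subm T (s ∪ b))⁻¹ -
        fill0 s (subm T s)⁻¹).PosDef ∧
      ∀ i ∈ a, ∀ j ∈ b,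
        (fill0 (a ∪ s) (subm T (a ∪ s))⁻¹ + fill0 (s ∪ b) (subm T (s ∪ b))⁻¹ -
            fill0 s (subm T s)⁻¹) i j = 0 ∧
        (fill0 (a ∪ s) (subm T (a ∪ s))⁻¹ + fill0 (s ∪ b) (subm T (s ∪ b))⁻¹ -
            fill0 s (subm T s)⁻¹) j i = 0 := by
  classical
  have hM1 : (subm T (a ∪ s)).PosDef := subm_posDef hT _
  have hM2 : (subm T (s ∪ b)).PosDef := subm_posDef hT _
  have hMs : (subm T s).PosDef := subm_posDef hT _
  constructor
  · refine posDef_iff_dotProduct_mulVec.mpr ⟨((fill0_isHermitian hM1.inv.1).add (fill0_isHermitian hM2.inv.1)).sub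
      (fill0_isHermitian hMs.inv.1), fun x hx => ?_⟩
    have hquad : star x ⬝ᵥ
        ((fill0 (a ∪ s) (subm T (a ∪ s))⁻¹ + fill0 (s ∪ b) (subm T (s ∪ b))⁻¹ -
          fill0 s (subm T s)⁻¹) *ᵥ x)
        = restr x (a ∪ s) ⬝ᵥ (subm T (a ∪ s))⁻¹ *ᵥ restr x (a ∪ s)
          + restr x (s ∪ b) ⬝ᵥ (subm T (s ∪ b))⁻¹ *ᵥ restr x (s ∪ b)
          - restr x s ⬝ᵥ (subm T s)⁻¹ *ᵥ restr x s := by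
      rw [star_trivial, sub_mulVec, add_mulVec, dotProduct_sub, dotProduct_add,
        quad_fill0, quad_fill0, quad_fill0]
    rw [hquad]
    -- key inequality: q_s ≤ q_{s ∪ b}
    set z : {x // x ∈ s} → ℝ := (subm T s)⁻¹ *ᵥ restr x s with hz
    have hsC2 : s ⊆ s ∪ b := Finset.subset_union_left
    set z' : {x // x ∈ s ∪ b} → ℝ := restr (ext0 s z) (s ∪ b) with hz'
    have hD : ext0 (s ∪ b) z' = ext0 s z := ext0_restr_ext0 hsC2 z
    have hMsinv : (subm T s) * (subm T s)⁻¹ = 1 :=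
      mul_nonsing_inv _ hMs.det_pos.ne'.isUnit
    have hq3a : z ⬝ᵥ restr x s = restr x s ⬝ᵥ (subm T s)⁻¹ *ᵥ restr x s :=
      dotProduct_comm _ _
    have hq3b : z ⬝ᵥ (subm T s) *ᵥ z = restr x s ⬝ᵥ (subm T s)⁻¹ *ᵥ restr x s := by
      rw [hz, mulVec_mulVec, hMsinv, one_mulVec, ← hz, hq3a]
    have hi : z' ⬝ᵥ restr x (s ∪ b) = z ⬝ᵥ restr x s := by
      rw [← dot_ext0, hD, dot_ext0]
    have hii : z' ⬝ᵥ (subm T (s ∪ b)) *ᵥ z' = z ⬝ᵥ (subm T s) *ᵥ z := by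
      rw [← quad_ext0, hD, quad_ext0]
    have hvar := variational hM2 (restr x (s ∪ b)) z'
    rw [hi, hii, hq3a, hq3b] at hvar
    -- hvar : 2 * q3 - q3 ≤ q2, i.e. q3 ≤ q2
    by_cases h1 : restr x (a ∪ s) = 0
    · -- x vanishes on a ∪ s, hence on s; and restr x (s ∪ b) ≠ 0
      have hxs : restr x s = 0 := by
        funext i
        exact congrFun h1 ⟨(i : Fin p), Finset.mem_union_right _ i.2⟩
      have hx2 : restr x (s ∪ b) ≠ 0 := by
        intro h2
        apply hx
        funext i
        have hi' : i ∈ a ∪ s ∪ b := hcover ▸ Finset.mem_univ i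
        rcases Finset.mem_union.1 hi' with h | h
        · exact congrFun h1 ⟨i, h⟩
        · exact congrFun h2 ⟨i, Finset.mem_union_right _ h⟩
      have hq2pos : 0 < restr x (s ∪ b) ⬝ᵥ (subm T (s ∪ b))⁻¹ *ᵥ restr x (s ∪ b) := by
        have := hM2.inv.dotProduct_mulVec_pos hx2
        simpa using this
      rw [h1, hxs]
      simpa using hq2pos
    · have hq1pos : 0 < restr x (a ∪ s) ⬝ᵥ (subm T (a ∪ s))⁻¹ *ᵥ restr x (a ∪ s) := by
        have := hM1.inv.dotProduct_mulVec_pos h1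
        simpa using this
      linarith
  · intro i hi j hj
    have hja : j ∉ a := Finset.disjoint_right.1 hab hj
    have hjs : j ∉ s := Finset.disjoint_right.1 hsb hj
    have his : i ∉ s := Finset.disjoint_left.1 has hi
    have hib : i ∉ b := Finset.disjoint_left.1 hab hi
    have hj1 : j ∉ a ∪ s := by simp [hja, hjs]
    have hi2 : i ∉ s ∪ b := by simp [his, hib]
    constructor <;>
      simp [fill0, Matrix.sub_apply, Matrix.add_apply, hj1, hi2, his, hjs, hja, hib, hi, hj]
end
end

section
/- Fix a partition of the index set {1,…,p} into three pairwise disjoint subsets a, s, b with a and b nonempty, and set C₁ = a ∪ s, C₂ = s ∪ b. Let T be a symmetric positive definite real p×p matrix and let L = [T_{C₁}⁻¹]⁰ + [T_{C₂}⁻¹]⁰ − [T_s⁻¹]⁰. Then L is invertible and the maximum likelihood estimate is locally consistent: (L⁻¹)_{C₁} = T_{C₁} and (L⁻¹)_{C₂} = T_{C₂}, i.e., the principal submatrix of L⁻¹ on C₁×C₁ equals T_{C₁} and the principal submatrix of L⁻¹ on C₂×C₂ equals T_{C₂}. -/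
open Matrix

noncomputable section

lemma posDef_submatrix_of_injective {n m : Type*} [Fintype n] [DecidableEq n]
    [Fintype m] [DecidableEq m] {M : Matrix n n ℝ} (hM : M.PosDef)
    {f : m → n} (hf : Function.Injective f) : (M.submatrix f f).PosDef := by
  refine posDef_iff_dotProduct_mulVec.mpr ⟨?_, ?_⟩
  · rw [Matrix.IsHermitian, conjTranspose_submatrix, hM.1]
  · intro x hx
    set y : n → ℝ := Function.extend f x 0 with hy
    have hyf : ∀ k, y (f k) = x k := fun k => hf.extend_apply x 0 k
    have hy0 : ∀ j, j ∉ Finset.univ.image f → y j = 0 := by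
      intro j hj
      rw [hy, Function.extend_apply']
      · rfl
      · rintro ⟨k, rfl⟩
        exact hj (Finset.mem_image_of_mem f (Finset.mem_univ k))
    have hyne : y ≠ 0 := by
      obtain ⟨k, hk⟩ := Function.ne_iff.mp hx
      exact Function.ne_iff.mpr ⟨f k, by simpa [hyf k] using hk⟩
    have hMy : ∀ i, (M *ᵥ y) (f i) = ((M.submatrix f f) *ᵥ x) i := by
      intro i
      simp only [mulVec, dotProduct, submatrix_apply]
      rw [← Finset.sum_subset (Finset.subset_univ (Finset.univ.image f))
        (fun j _ hj => by rw [hy0 j hj, mul_zero])]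
      rw [Finset.sum_image (fun x _ y _ h => hf h)]
      exact Finset.sum_congr rfl fun k _ => by rw [hyf k]
    have key : star x ⬝ᵥ ((M.submatrix f f) *ᵥ x) = star y ⬝ᵥ (M *ᵥ y) := by
      simp only [dotProduct, Pi.star_apply, star_trivial]
      rw [← Finset.sum_subset (Finset.subset_univ (Finset.univ.image f))
        (fun j _ hj => by rw [hy0 j hj, zero_mul])]
      rw [Finset.sum_image (fun x _ y _ h => hf h)]
      exact (Finset.sum_congr rfl fun k _ => by rw [hyf k, hMy k]).symm
    rw [key]
    exact hM.dotProduct_mulVec_pos hyne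


lemma fromRows_add' {m₁ m₂ n : Type*} (A₁ : Matrix m₁ n ℝ) (A₂ : Matrix m₂ n ℝ)
    (B₁ : Matrix m₁ n ℝ) (B₂ : Matrix m₂ n ℝ) :
    fromRows A₁ A₂ + fromRows B₁ B₂ = fromRows (A₁ + B₁) (A₂ + B₂) := by
  ext (i | i) j <;> simp

lemma fromCols_add' {m n₁ n₂ : Type*} (A₁ : Matrix m n₁ ℝ) (A₂ : Matrix m n₂ ℝ)
    (B₁ : Matrix m n₁ ℝ) (B₂ : Matrix m n₂ ℝ) :
    fromCols A₁ A₂ + fromCols B₁ B₂ = fromCols (A₁ + B₁) (A₂ + B₂) := by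
  ext i (j | j) <;> simp

lemma core_mul {α σ β : Type*} [Fintype α] [Fintype σ] [Fintype β]
    [DecidableEq α] [DecidableEq σ] [DecidableEq β]
    (Taa : Matrix α α ℝ) (Tas : Matrix α σ ℝ) (Tsa : Matrix σ α ℝ)
    (Tss : Matrix σ σ ℝ) (Tsb : Matrix σ β ℝ) (Tbs : Matrix β σ ℝ) (Tbb : Matrix β β ℝ)
    (h1 : IsUnit (fromBlocks Taa Tas Tsa Tss).det)
    (h2 : IsUnit (fromBlocks Tss Tsb Tbs Tbb).det)
    (hs : IsUnit Tss.det) :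
    (fromBlocks
      (fromBlocks ((fromBlocks Taa Tas Tsa Tss)⁻¹.toBlocks₁₁)
                  ((fromBlocks Taa Tas Tsa Tss)⁻¹.toBlocks₁₂)
                  ((fromBlocks Taa Tas Tsa Tss)⁻¹.toBlocks₂₁)
                  ((fromBlocks Taa Tas Tsa Tss)⁻¹.toBlocks₂₂
                    + (fromBlocks Tss Tsb Tbs Tbb)⁻¹.toBlocks₁₁ - Tss⁻¹))
      (fromRows 0 ((fromBlocks Tss Tsb Tbs Tbb)⁻¹.toBlocks₁₂))
      (fromCols 0 ((fromBlocks Tss Tsb Tbs Tbb)⁻¹.toBlocks₂₁))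
      ((fromBlocks Tss Tsb Tbs Tbb)⁻¹.toBlocks₂₂)) *
    (fromBlocks (fromBlocks Taa Tas Tsa Tss) (fromRows (Tas * Tss⁻¹ * Tsb) Tsb)
      (fromCols (Tbs * Tss⁻¹ * Tsa) Tbs) Tbb) = 1 := by
  set Z := Tss⁻¹ with hZdef
  set X := (fromBlocks Taa Tas Tsa Tss)⁻¹ with hXdef
  set Y := (fromBlocks Tss Tsb Tbs Tbb)⁻¹ with hYdef
  have hz1 : Tss * Z = 1 := mul_nonsing_inv Tss hs
  have hXA : X * fromBlocks Taa Tas Tsa Tss = 1 := nonsing_inv_mul _ h1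
  have hYB : Y * fromBlocks Tss Tsb Tbs Tbb = 1 := nonsing_inv_mul _ h2
  rw [← fromBlocks_toBlocks X, fromBlocks_multiply, ← fromBlocks_one] at hXA
  rw [← fromBlocks_toBlocks Y, fromBlocks_multiply, ← fromBlocks_one] at hYB
  obtain ⟨i1, i2, i3, i4⟩ := fromBlocks_inj.mp hXA
  obtain ⟨j1, j2, j3, j4⟩ := fromBlocks_inj.mp hYB
  set X11 := X.toBlocks₁₁; set X12 := X.toBlocks₁₂
  set X21 := X.toBlocks₂₁; set X22 := X.toBlocks₂₂
  set Y11 := Y.toBlocks₁₁; set Y12 := Y.toBlocks₁₂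
  set Y21 := Y.toBlocks₂₁; set Y22 := Y.toBlocks₂₂
  rw [fromBlocks_multiply, fromBlocks_multiply, fromRows_mul_fromCols,
    fromBlocks_mul_fromRows, fromRows_mul, fromCols_mul_fromBlocks,
    mul_fromCols, fromCols_mul_fromRows, fromRows_add', fromCols_add', fromBlocks_add]
  have hTsa : Tss * (Z * Tsa) = Tsa := by rw [← Matrix.mul_assoc, hz1, Matrix.one_mul]
  have hTsb : Tss * (Z * Tsb) = Tsb := by rw [← Matrix.mul_assoc, hz1, Matrix.one_mul]
  have hzs : Z * Tss = 1 := nonsing_inv_mul Tss hs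
  have g11 : X11 * Taa + X12 * Tsa + (0 : Matrix α β ℝ) * (Tbs * Z * Tsa) = 1 := by
    rw [Matrix.zero_mul, add_zero, i1]
  have g12 : X11 * Tas + X12 * Tss + (0 : Matrix α β ℝ) * Tbs = 0 := by
    rw [Matrix.zero_mul, add_zero, i2]
  have g21 : X21 * Taa + (X22 + Y11 - Z) * Tsa + Y12 * (Tbs * Z * Tsa) = 0 := by
    have e1 : Y12 * (Tbs * Z * Tsa) = Y12 * Tbs * (Z * Tsa) := by
      rw [Matrix.mul_assoc Y12 Tbs, ← Matrix.mul_assoc Tbs Z Tsa]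
    have e2 : Y11 * Tsa = Y11 * Tss * (Z * Tsa) := by rw [Matrix.mul_assoc, hTsa]
    rw [Matrix.sub_mul, Matrix.add_mul, e1, e2]
    calc X21 * Taa + (X22 * Tsa + Y11 * Tss * (Z * Tsa) - Z * Tsa)
          + Y12 * Tbs * (Z * Tsa)
        = (X21 * Taa + X22 * Tsa)
          + ((Y11 * Tss + Y12 * Tbs) * (Z * Tsa) - Z * Tsa) := by
          rw [Matrix.add_mul]; abel
      _ = 0 := by rw [i3, j1, Matrix.one_mul]; abel
  have g22 : X21 * Tas + (X22 + Y11 - Z) * Tss + Y12 * Tbs = 1 := by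
    rw [Matrix.sub_mul, Matrix.add_mul]
    calc X21 * Tas + (X22 * Tss + Y11 * Tss - Z * Tss) + Y12 * Tbs
        = (X21 * Tas + X22 * Tss) + (Y11 * Tss + Y12 * Tbs) - Z * Tss := by abel
      _ = 1 := by rw [i4, j1, hzs]; abel
  have r1 : X11 * (Tas * Z * Tsb) + X12 * Tsb + (0 : Matrix α β ℝ) * Tbb = 0 := by
    rw [Matrix.zero_mul, add_zero]
    have e : X11 * (Tas * Z * Tsb) + X12 * Tsb
        = (X11 * Tas + X12 * Tss) * (Z * Tsb) := by
      have e1 : X11 * (Tas * Z * Tsb) = X11 * Tas * (Z * Tsb) := by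
        rw [Matrix.mul_assoc X11 Tas, ← Matrix.mul_assoc Tas Z Tsb]
      have e2 : X12 * Tsb = X12 * Tss * (Z * Tsb) := by rw [Matrix.mul_assoc, hTsb]
      rw [e1, e2, Matrix.add_mul]
    rw [e, i2, Matrix.zero_mul]
  have r2 : X21 * (Tas * Z * Tsb) + (X22 + Y11 - Z) * Tsb + Y12 * Tbb = 0 := by
    have e1 : X21 * (Tas * Z * Tsb) = X21 * Tas * (Z * Tsb) := by
      rw [Matrix.mul_assoc X21 Tas, ← Matrix.mul_assoc Tas Z Tsb]
    have e2 : X22 * Tsb = X22 * Tss * (Z * Tsb) := by rw [Matrix.mul_assoc, hTsb]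
    have e3 : Z * Tsb = (1 : Matrix σ σ ℝ) * (Z * Tsb) := by rw [Matrix.one_mul]
    rw [Matrix.sub_mul, Matrix.add_mul, e1, e2]
    calc X21 * Tas * (Z * Tsb) + (X22 * Tss * (Z * Tsb) + Y11 * Tsb - Z * Tsb)
          + Y12 * Tbb
        = ((X21 * Tas + X22 * Tss) * (Z * Tsb) - Z * Tsb)
          + (Y11 * Tsb + Y12 * Tbb) := by rw [Matrix.add_mul]; abel
      _ = 0 := by rw [i4, Matrix.one_mul, j2]; abel
  have c1 : (0 : Matrix β α ℝ) * Taa + Y21 * Tsa + Y22 * (Tbs * Z * Tsa) = 0 := by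
    rw [Matrix.zero_mul, zero_add]
    have eA : Y21 * Tsa = Y21 * Tss * (Z * Tsa) := by rw [Matrix.mul_assoc, hTsa]
    have eB : Y22 * (Tbs * Z * Tsa) = Y22 * Tbs * (Z * Tsa) := by
      rw [Matrix.mul_assoc Y22 Tbs, ← Matrix.mul_assoc Tbs Z Tsa]
    rw [eA, eB, ← Matrix.add_mul, j3, Matrix.zero_mul]
  have c2 : (0 : Matrix β α ℝ) * Tas + Y21 * Tss + Y22 * Tbs = 0 := by
    rw [Matrix.zero_mul, zero_add, j3]
  have g33 : (0 : Matrix β α ℝ) * (Tas * Z * Tsb) + Y21 * Tsb + Y22 * Tbb = 1 := by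
    rw [Matrix.zero_mul, zero_add, j4]
  rw [g11, g12, g21, g22, fromBlocks_one, r1, r2, fromRows_zero, c1, c2,
    fromCols_zero, g33, fromBlocks_one]

set_option maxHeartbeats 1600000 in
/-- In the two-clique decomposable model with cliques `C₁ = a ∪ s`, `C₂ = s ∪ b`,
the matrix `L = [T_{C₁}⁻¹]⁰ + [T_{C₂}⁻¹]⁰ − [T_s⁻¹]⁰` is invertible and locally
consistent: `(L⁻¹)_{C₁} = T_{C₁}` and `(L⁻¹)_{C₂} = T_{C₂}`. -/
theorem mle_locally_consistent
    {p : ℕ} (a s b : Finset (Fin p))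
    (hab : Disjoint a b) (has : Disjoint a s) (hsb : Disjoint s b)
    (hcover : a ∪ s ∪ b = Finset.univ)
    (ha : a.Nonempty) (hb : b.Nonempty)
    (T : Matrix (Fin p) (Fin p) ℝ) (hT : T.PosDef) :
    IsUnit (fill0 (a ∪ s) (subm T (a ∪ s))⁻¹ + fill0 (s ∪ b) (subm T (s ∪ b))⁻¹ -
        fill0 s (subm T s)⁻¹).det ∧
      subm (fill0 (a ∪ s) (subm T (a ∪ s))⁻¹ + fill0 (s ∪ b) (subm T (s ∪ b))⁻¹ -
          fill0 s (subm T s)⁻¹)⁻¹ (a ∪ s) = subm T (a ∪ s) ∧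
      subm (fill0 (a ∪ s) (subm T (a ∪ s))⁻¹ + fill0 (s ∪ b) (subm T (s ∪ b))⁻¹ -
          fill0 s (subm T s)⁻¹)⁻¹ (s ∪ b) = subm T (s ∪ b) := by
  classical
  set L := fill0 (a ∪ s) (subm T (a ∪ s))⁻¹ + fill0 (s ∪ b) (subm T (s ∪ b))⁻¹ -
      fill0 s (subm T s)⁻¹ with hLdef
  -- the equivalence with the three-block sum type
  let f : (↥a ⊕ ↥s) ⊕ ↥b → Fin p := Sum.elim (Sum.elim (fun i => ↑i) (fun i => ↑i)) (fun i => ↑i)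
  have hfinj : Function.Injective f := by
    rintro ((x | x) | x) ((y | y) | y) h <;>
      simp only [f, Sum.elim_inl, Sum.elim_inr] at h
    · exact congrArg (Sum.inl ∘ Sum.inl) (Subtype.ext h)
    · exact absurd (h ▸ y.2) (Finset.disjoint_left.mp has x.2)
    · exact absurd (h ▸ y.2) (Finset.disjoint_left.mp hab x.2)
    · exact absurd (h ▸ x.2) (Finset.disjoint_left.mp has y.2)
    · exact congrArg (Sum.inl ∘ Sum.inr) (Subtype.ext h)
    · exact absurd (h ▸ y.2) (Finset.disjoint_left.mp hsb x.2)
    · exact absurd (h ▸ x.2) (Finset.disjoint_left.mp hab y.2)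
    · exact absurd (h ▸ x.2) (Finset.disjoint_left.mp hsb y.2)
    · exact congrArg Sum.inr (Subtype.ext h)
  have hfsurj : Function.Surjective f := by
    intro i
    have hi : i ∈ a ∪ s ∪ b := by rw [hcover]; exact Finset.mem_univ i
    rcases Finset.mem_union.mp hi with hi' | hi'
    · rcases Finset.mem_union.mp hi' with h | h
      · exact ⟨Sum.inl (Sum.inl ⟨i, h⟩), rfl⟩
      · exact ⟨Sum.inl (Sum.inr ⟨i, h⟩), rfl⟩
    · exact ⟨Sum.inr ⟨i, hi'⟩, rfl⟩
  let e : ((↥a ⊕ ↥s) ⊕ ↥b) ≃ Fin p := Equiv.ofBijective f ⟨hfinj, hfsurj⟩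
  -- blocks of T
  let Taa : Matrix ↥a ↥a ℝ := T.submatrix (fun i => ↑i) (fun j => ↑j)
  let Tas : Matrix ↥a ↥s ℝ := T.submatrix (fun i => ↑i) (fun j => ↑j)
  let Tsa : Matrix ↥s ↥a ℝ := T.submatrix (fun i => ↑i) (fun j => ↑j)
  let Tss : Matrix ↥s ↥s ℝ := T.submatrix (fun i => ↑i) (fun j => ↑j)
  let Tsb : Matrix ↥s ↥b ℝ := T.submatrix (fun i => ↑i) (fun j => ↑j)
  let Tbs : Matrix ↥b ↥s ℝ := T.submatrix (fun i => ↑i) (fun j => ↑j)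
  let Tbb : Matrix ↥b ↥b ℝ := T.submatrix (fun i => ↑i) (fun j => ↑j)
  -- invertibility of the clique blocks
  have hdet : ∀ {m : Type} [Fintype m] [DecidableEq m] (g : m → Fin p),
      Function.Injective g → IsUnit (T.submatrix g g).det := by
    intro m _ _ g hg
    exact isUnit_iff_ne_zero.mpr (posDef_submatrix_of_injective hT hg).det_pos.ne'
  have hu1 : IsUnit (fromBlocks Taa Tas Tsa Tss).det := by
    have heq : fromBlocks Taa Tas Tsa Tss
        = T.submatrix (Sum.elim (fun i : ↥a => (↑i : Fin p)) (fun i : ↥s => ↑i))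
            (Sum.elim (fun i : ↥a => (↑i : Fin p)) (fun i : ↥s => ↑i)) := by
      ext (x | x) (y | y) <;> rfl
    rw [heq]
    refine hdet _ ?_
    rintro (x | x) (y | y) h <;> simp only [Sum.elim_inl, Sum.elim_inr] at h
    · exact congrArg Sum.inl (Subtype.ext h)
    · exact absurd (h ▸ y.2) (Finset.disjoint_left.mp has x.2)
    · exact absurd (h ▸ x.2) (Finset.disjoint_left.mp has y.2)
    · exact congrArg Sum.inr (Subtype.ext h)
  have hu2 : IsUnit (fromBlocks Tss Tsb Tbs Tbb).det := by
    have heq : fromBlocks Tss Tsb Tbs Tbb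
        = T.submatrix (Sum.elim (fun i : ↥s => (↑i : Fin p)) (fun i : ↥b => ↑i))
            (Sum.elim (fun i : ↥s => (↑i : Fin p)) (fun i : ↥b => ↑i)) := by
      ext (x | x) (y | y) <;> rfl
    rw [heq]
    refine hdet _ ?_
    rintro (x | x) (y | y) h <;> simp only [Sum.elim_inl, Sum.elim_inr] at h
    · exact congrArg Sum.inl (Subtype.ext h)
    · exact absurd (h ▸ y.2) (Finset.disjoint_left.mp hsb x.2)
    · exact absurd (h ▸ x.2) (Finset.disjoint_left.mp hsb y.2)
    · exact congrArg Sum.inr (Subtype.ext h)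
  have hus : IsUnit Tss.det := hdet _ (fun x y h => Subtype.ext h)
  -- equivalences for the two cliques
  let g₁ : ↥a ⊕ ↥s → ↥(a ∪ s) := Sum.elim (fun i => ⟨↑i, Finset.mem_union_left s i.2⟩)
    (fun i => ⟨↑i, Finset.mem_union_right a i.2⟩)
  have hg₁ : Function.Bijective g₁ := by
    constructor
    · rintro (x | x) (y | y) h <;>
        simp only [g₁, Sum.elim_inl, Sum.elim_inr, Subtype.mk.injEq] at h
      · exact congrArg Sum.inl (Subtype.ext h)
      · exact absurd (h ▸ y.2) (Finset.disjoint_left.mp has x.2)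
      · exact absurd (h ▸ x.2) (Finset.disjoint_left.mp has y.2)
      · exact congrArg Sum.inr (Subtype.ext h)
    · rintro ⟨i, hi⟩
      rcases Finset.mem_union.mp hi with h | h
      · exact ⟨Sum.inl ⟨i, h⟩, rfl⟩
      · exact ⟨Sum.inr ⟨i, h⟩, rfl⟩
  let u₁ : (↥a ⊕ ↥s) ≃ ↥(a ∪ s) := Equiv.ofBijective g₁ hg₁
  let g₂ : ↥s ⊕ ↥b → ↥(s ∪ b) := Sum.elim (fun i => ⟨↑i, Finset.mem_union_left b i.2⟩)
    (fun i => ⟨↑i, Finset.mem_union_right s i.2⟩)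
  have hg₂ : Function.Bijective g₂ := by
    constructor
    · rintro (x | x) (y | y) h <;>
        simp only [g₂, Sum.elim_inl, Sum.elim_inr, Subtype.mk.injEq] at h
      · exact congrArg Sum.inl (Subtype.ext h)
      · exact absurd (h ▸ y.2) (Finset.disjoint_left.mp hsb x.2)
      · exact absurd (h ▸ x.2) (Finset.disjoint_left.mp hsb y.2)
      · exact congrArg Sum.inr (Subtype.ext h)
    · rintro ⟨i, hi⟩
      rcases Finset.mem_union.mp hi with h | h
      · exact ⟨Sum.inl ⟨i, h⟩, rfl⟩
      · exact ⟨Sum.inr ⟨i, h⟩, rfl⟩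
  let u₂ : (↥s ⊕ ↥b) ≃ ↥(s ∪ b) := Equiv.ofBijective g₂ hg₂
  -- transfer of inverses
  let XB := (fromBlocks Taa Tas Tsa Tss)⁻¹
  let YB := (fromBlocks Tss Tsb Tbs Tbb)⁻¹
  have hC1 : (subm T (a ∪ s)).submatrix ⇑u₁ ⇑u₁ = fromBlocks Taa Tas Tsa Tss := by
    ext (x | x) (y | y) <;> rfl
  have hC2 : (subm T (s ∪ b)).submatrix ⇑u₂ ⇑u₂ = fromBlocks Tss Tsb Tbs Tbb := by
    ext (x | x) (y | y) <;> rfl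
  have hXs : ((subm T (a ∪ s))⁻¹).submatrix ⇑u₁ ⇑u₁ = XB := by
    rw [← Matrix.inv_submatrix_equiv (subm T (a ∪ s)) u₁ u₁, hC1]
  have hYs : ((subm T (s ∪ b))⁻¹).submatrix ⇑u₂ ⇑u₂ = YB := by
    rw [← Matrix.inv_submatrix_equiv (subm T (s ∪ b)) u₂ u₂, hC2]
  have hXe : ∀ x y, (subm T (a ∪ s))⁻¹ (u₁ x) (u₁ y) = XB x y :=
    fun x y => congrFun (congrFun hXs x) y
  have hYe : ∀ x y, (subm T (s ∪ b))⁻¹ (u₂ x) (u₂ y) = YB x y :=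
    fun x y => congrFun (congrFun hYs x) y
  -- membership facts
  have maa : ∀ x : ↥a, (↑x : Fin p) ∈ a ∪ s := fun x => Finset.mem_union_left s x.2
  have msa : ∀ x : ↥s, (↑x : Fin p) ∈ a ∪ s := fun x => Finset.mem_union_right a x.2
  have msb : ∀ x : ↥s, (↑x : Fin p) ∈ s ∪ b := fun x => Finset.mem_union_left b x.2
  have mbb : ∀ x : ↥b, (↑x : Fin p) ∈ s ∪ b := fun x => Finset.mem_union_right s x.2
  have nasb : ∀ x : ↥a, (↑x : Fin p) ∉ s ∪ b := by
    intro x hx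
    rcases Finset.mem_union.mp hx with h | h
    · exact Finset.disjoint_left.mp has x.2 h
    · exact Finset.disjoint_left.mp hab x.2 h
  have nas : ∀ x : ↥a, (↑x : Fin p) ∉ s := fun x h => Finset.disjoint_left.mp has x.2 h
  have nbas : ∀ x : ↥b, (↑x : Fin p) ∉ a ∪ s := by
    intro x hx
    rcases Finset.mem_union.mp hx with h | h
    · exact Finset.disjoint_left.mp hab h x.2
    · exact Finset.disjoint_left.mp hsb h x.2
  have nbs : ∀ x : ↥b, (↑x : Fin p) ∉ s := fun x h => Finset.disjoint_left.mp hsb h x.2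
  -- the reindexed L
  have he : ∀ z, e z = f z := fun _ => rfl
  have hLsub : L.submatrix ⇑e ⇑e =
      fromBlocks
        (fromBlocks XB.toBlocks₁₁ XB.toBlocks₁₂ XB.toBlocks₂₁
          (XB.toBlocks₂₂ + YB.toBlocks₁₁ - Tss⁻¹))
        (fromRows 0 YB.toBlocks₁₂)
        (fromCols 0 YB.toBlocks₂₁)
        YB.toBlocks₂₂ := by
    ext ((x | x) | x) ((y | y) | y) <;>
      simp only [hLdef, submatrix_apply, he, f, Sum.elim_inl, Sum.elim_inr, Matrix.sub_apply, Matrix.add_apply, fill0, of_apply,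
        fromBlocks_apply₁₁, fromBlocks_apply₁₂, fromBlocks_apply₂₁, fromBlocks_apply₂₂,
        fromRows_apply_inl, fromRows_apply_inr, fromCols_apply_inl, fromCols_apply_inr,
        Matrix.zero_apply, toBlocks₁₁, toBlocks₁₂, toBlocks₂₁, toBlocks₂₂]
    · rw [dif_pos (maa x), dif_pos (maa y), dif_neg (nasb x), dif_neg (nas x),
        add_zero, sub_zero]
      exact hXe (Sum.inl x) (Sum.inl y)
    · rw [dif_pos (maa x), dif_pos (msa y), dif_neg (nasb x), dif_neg (nas x),
        add_zero, sub_zero]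
      exact hXe (Sum.inl x) (Sum.inr y)
    · rw [dif_pos (maa x), dif_neg (nbas y), dif_neg (nasb x), dif_neg (nas x)]
      simp
    · rw [dif_pos (msa x), dif_pos (maa y), dif_pos (msb x), dif_neg (nasb y),
        dif_pos x.2, dif_neg (nas y), add_zero, sub_zero]
      exact hXe (Sum.inr x) (Sum.inl y)
    · rw [dif_pos (msa x), dif_pos (msa y), dif_pos (msb x), dif_pos (msb y),
        dif_pos x.2, dif_pos y.2]
      exact congrArg₂ (fun u v => u + v - Tss⁻¹ x y)
        (hXe (Sum.inr x) (Sum.inr y)) (hYe (Sum.inl x) (Sum.inl y))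
    · rw [dif_pos (msa x), dif_neg (nbas y), dif_pos (msb x), dif_pos (mbb y),
        dif_pos x.2, dif_neg (nbs y), zero_add, sub_zero]
      exact hYe (Sum.inl x) (Sum.inr y)
    · rw [dif_neg (nbas x), dif_pos (mbb x), dif_neg (nasb y), dif_neg (nbs x)]
      simp
    · rw [dif_neg (nbas x), dif_pos (mbb x), dif_pos (msb y), dif_neg (nbs x),
        zero_add, sub_zero]
      exact hYe (Sum.inr x) (Sum.inl y)
    · rw [dif_neg (nbas x), dif_pos (mbb x), dif_pos (mbb y), dif_neg (nbs x),
        zero_add, sub_zero]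
      exact hYe (Sum.inr x) (Sum.inr y)
  -- the explicit inverse
  have hLK := core_mul Taa Tas Tsa Tss Tsb Tbs Tbb hu1 hu2 hus
  have h5 : (L.submatrix ⇑e ⇑e) *
      (fromBlocks (fromBlocks Taa Tas Tsa Tss) (fromRows (Tas * Tss⁻¹ * Tsb) Tsb)
        (fromCols (Tbs * Tss⁻¹ * Tsa) Tbs) Tbb) = 1 := by
    rw [hLsub]; exact hLK
  have hdetL : IsUnit L.det := by
    rw [← det_submatrix_equiv_self e L]
    exact Matrix.isUnit_det_of_right_inverse h5
  have hinv : L⁻¹.submatrix ⇑e ⇑e =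
      fromBlocks (fromBlocks Taa Tas Tsa Tss) (fromRows (Tas * Tss⁻¹ * Tsb) Tsb)
        (fromCols (Tbs * Tss⁻¹ * Tsa) Tbs) Tbb := by
    rw [← Matrix.inv_submatrix_equiv L e e]
    exact inv_eq_right_inv h5
  have hKe : ∀ x y, L⁻¹ (e x) (e y) =
      (fromBlocks (fromBlocks Taa Tas Tsa Tss) (fromRows (Tas * Tss⁻¹ * Tsb) Tsb)
        (fromCols (Tbs * Tss⁻¹ * Tsa) Tbs) Tbb) x y :=
    fun x y => congrFun (congrFun hinv x) y
  refine ⟨hdetL, ?_, ?_⟩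
  · ext i j
    show L⁻¹ ↑i ↑j = T ↑i ↑j
    rcases Finset.mem_union.mp i.2 with hi | hi <;> rcases Finset.mem_union.mp j.2 with hj | hj
    · exact hKe (Sum.inl (Sum.inl ⟨↑i, hi⟩)) (Sum.inl (Sum.inl ⟨↑j, hj⟩))
    · exact hKe (Sum.inl (Sum.inl ⟨↑i, hi⟩)) (Sum.inl (Sum.inr ⟨↑j, hj⟩))
    · exact hKe (Sum.inl (Sum.inr ⟨↑i, hi⟩)) (Sum.inl (Sum.inl ⟨↑j, hj⟩))
    · exact hKe (Sum.inl (Sum.inr ⟨↑i, hi⟩)) (Sum.inl (Sum.inr ⟨↑j, hj⟩))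
  · ext i j
    show L⁻¹ ↑i ↑j = T ↑i ↑j
    rcases Finset.mem_union.mp i.2 with hi | hi <;> rcases Finset.mem_union.mp j.2 with hj | hj
    · exact hKe (Sum.inl (Sum.inr ⟨↑i, hi⟩)) (Sum.inl (Sum.inr ⟨↑j, hj⟩))
    · exact hKe (Sum.inl (Sum.inr ⟨↑i, hi⟩)) (Sum.inr ⟨↑j, hj⟩)
    · exact hKe (Sum.inr ⟨↑i, hi⟩) (Sum.inl (Sum.inr ⟨↑j, hj⟩))
    · exact hKe (Sum.inr ⟨↑i, hi⟩) (Sum.inr ⟨↑j, hj⟩)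
end
end

section
/- Fix a partition of the index set {1,…,p} into three pairwise disjoint nonempty subsets a, s, b, and set C₁ = a ∪ s, C₂ = s ∪ b, with cardinalities c₁ = |C₁|, c₂ = |C₂|, so c₁ + c₂ − |s| = p. Let T be a symmetric positive definite real p×p matrix and let n be an integer with n > p + 1. Define M = [(n−c₁−1) T_{C₁}⁻¹]⁰ + [(n−c₂−1) T_{C₂}⁻¹]⁰ − [(n−|s|−1) T_s⁻¹]⁰. Then M is symmetric positive definite and (M⁻¹)_s = (1/(n−p−1)) · T_s, i.e., the principal submatrix of M⁻¹ on s×s equals T_s divided by n−p−1. -/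
open Matrix
noncomputable section
set_option linter.unusedSectionVars false
set_option maxHeartbeats 1000000
variable {m n : Type*} [Fintype m] [Fintype n] [DecidableEq m] [DecidableEq n]


lemma posDef_smul {M : Matrix n n ℝ} (hM : M.PosDef) {c : ℝ} (hc : 0 < c) :
    (c • M).PosDef := by
  refine Matrix.PosDef.of_dotProduct_mulVec_pos ?_ (fun x hx => ?_)
  · unfold Matrix.IsHermitian
    rw [conjTranspose_smul, hM.1]
    simp
  · rw [smul_mulVec, dotProduct_smul]
    exact mul_pos hc (hM.dotProduct_mulVec_pos hx)

lemma posDef_submatrix_inj {M : Matrix n n ℝ} (hM : M.PosDef)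
    (e : m → n) (he : Function.Injective e) : (M.submatrix e e).PosDef := by
  refine Matrix.PosDef.of_dotProduct_mulVec_pos (hM.1.submatrix e) (fun x hx => ?_)
  set F : Matrix n m ℝ := (1 : Matrix n n ℝ).submatrix id e with hF
  have hFx : ∀ i, (F *ᵥ x) (e i) = x i := by
    intro i
    simp [hF, mulVec, dotProduct, one_apply, ite_mul, he.eq_iff, Finset.sum_ite_eq]
  have hsub : M.submatrix e e = Fᴴ * M * F := by
    have h1 : Fᴴ = (1 : Matrix n n ℝ).submatrix e id := by
      rw [hF, conjTranspose_submatrix]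
      simp
    rw [h1, hF]
    rw [(by simp : M = 1 * M * 1), Matrix.submatrix_mul (he₂ := Function.bijective_id),
      Matrix.submatrix_mul (he₂ := Function.bijective_id), submatrix_id_id]
    simp [Matrix.mul_one, Matrix.one_mul]
  have hFx0 : F *ᵥ x ≠ 0 := by
    intro h0
    apply hx
    funext i
    have := congrFun h0 (e i)
    rw [hFx i] at this
    simpa using this
  have := hM.dotProduct_mulVec_pos hFx0
  calc (0:ℝ) < dotProduct (star (F *ᵥ x)) (M *ᵥ (F *ᵥ x)) := this
    _ = dotProduct (star x) ((M.submatrix e e) *ᵥ x) := by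
        rw [hsub, ← mulVec_mulVec, ← mulVec_mulVec]
        rw [star_mulVec, ← dotProduct_mulVec]

lemma posDef_submatrix_equiv {M : Matrix n n ℝ} (e : m ≃ n) :
    (M.submatrix e e).PosDef ↔ M.PosDef := by
  constructor
  · intro h
    have := posDef_submatrix_inj h e.symm e.symm.injective
    simpa using this
  · intro h
    exact posDef_submatrix_inj h e e.injective


lemma sum_elim_ne_zero_left {x : m ⊕ n → ℝ} (hx : x ≠ 0) (h2 : x ∘ Sum.inr = 0) :
    x ∘ Sum.inl ≠ 0 := by
  intro h1
  apply hx
  funext i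
  cases i with
  | inl i => exact congrFun h1 i
  | inr i => exact congrFun h2 i

lemma posDef_fromBlocks₁₁ {A : Matrix m m ℝ} {B : Matrix m n ℝ} {D : Matrix n n ℝ}
    (hA : A.PosDef) (hSchur : (D - Bᴴ * A⁻¹ * B).PosDef) :
    (fromBlocks A B Bᴴ D).PosDef := by
  haveI : Invertible A := hA.isUnit.invertible
  refine Matrix.PosDef.of_dotProduct_mulVec_pos ?_ (fun x hx => ?_)
  · rw [Matrix.IsHermitian.fromBlocks₁₁ _ _ hA.1]
    exact hSchur.1
  · have hx' : Sum.elim (x ∘ Sum.inl) (x ∘ Sum.inr) = x := Sum.elim_comp_inl_inr x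
    rw [← hx', dotProduct_mulVec, schur_complement_eq₁₁ B D _ _ hA.1]
    by_cases h2 : x ∘ Sum.inr = 0
    · have h1 : x ∘ Sum.inl ≠ 0 := sum_elim_ne_zero_left hx h2
      rw [h2]
      simp only [mulVec_zero, add_zero, star_zero, zero_vecMul, dotProduct_zero]
      have := hA.dotProduct_mulVec_pos h1
      rwa [dotProduct_mulVec] at this
    · have t2 : 0 < star (x ∘ Sum.inr) ᵥ* (D - Bᴴ * A⁻¹ * B) ⬝ᵥ (x ∘ Sum.inr) := by
        have := hSchur.dotProduct_mulVec_pos h2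
        rwa [dotProduct_mulVec] at this
      have t1 : 0 ≤ star (x ∘ Sum.inl + (A⁻¹ * B) *ᵥ (x ∘ Sum.inr)) ᵥ* A ⬝ᵥ
          (x ∘ Sum.inl + (A⁻¹ * B) *ᵥ (x ∘ Sum.inr)) := by
        have := hA.posSemidef.dotProduct_mulVec_nonneg (x ∘ Sum.inl + (A⁻¹ * B) *ᵥ (x ∘ Sum.inr))
        rwa [dotProduct_mulVec] at this
      linarith

lemma posDef_fromBlocks₂₂ {A : Matrix m m ℝ} {B : Matrix m n ℝ} {D : Matrix n n ℝ}
    (hD : D.PosDef) (hSchur : (A - B * D⁻¹ * Bᴴ).PosDef) :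
    (fromBlocks A B Bᴴ D).PosDef := by
  haveI : Invertible D := hD.isUnit.invertible
  refine Matrix.PosDef.of_dotProduct_mulVec_pos ?_ (fun x hx => ?_)
  · rw [Matrix.IsHermitian.fromBlocks₂₂ _ _ hD.1]
    exact hSchur.1
  · have hx' : Sum.elim (x ∘ Sum.inl) (x ∘ Sum.inr) = x := Sum.elim_comp_inl_inr x
    rw [← hx', dotProduct_mulVec, schur_complement_eq₂₂ A B _ _ hD.1]
    by_cases h1 : x ∘ Sum.inl = 0
    · have h2 : x ∘ Sum.inr ≠ 0 := by
        intro h2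
        apply hx
        funext i
        cases i with
        | inl i => exact congrFun h1 i
        | inr i => exact congrFun h2 i
      rw [h1]
      simp only [mulVec_zero, zero_add, star_zero, zero_vecMul, dotProduct_zero]
      have := hD.dotProduct_mulVec_pos h2
      rw [dotProduct_mulVec] at this
      linarith
    · have t2 : 0 < star (x ∘ Sum.inl) ᵥ* (A - B * D⁻¹ * Bᴴ) ⬝ᵥ (x ∘ Sum.inl) := by
        have := hSchur.dotProduct_mulVec_pos h1
        rwa [dotProduct_mulVec] at this
      have t1 : 0 ≤ star ((D⁻¹ * Bᴴ) *ᵥ (x ∘ Sum.inl) + x ∘ Sum.inr) ᵥ* D ⬝ᵥ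
          ((D⁻¹ * Bᴴ) *ᵥ (x ∘ Sum.inl) + x ∘ Sum.inr) := by
        have := hD.posSemidef.dotProduct_mulVec_nonneg ((D⁻¹ * Bᴴ) *ᵥ (x ∘ Sum.inl) + x ∘ Sum.inr)
        rwa [dotProduct_mulVec] at this
      linarith

lemma posDef_schur₁₁ {A : Matrix m m ℝ} {B : Matrix m n ℝ} {D : Matrix n n ℝ}
    (h : (fromBlocks A B Bᴴ D).PosDef) (hA : A.PosDef) :
    (D - Bᴴ * A⁻¹ * B).PosDef := by
  haveI : Invertible A := hA.isUnit.invertible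
  refine Matrix.PosDef.of_dotProduct_mulVec_pos ?_ (fun y hy => ?_)
  · exact (Matrix.IsHermitian.fromBlocks₁₁ _ _ hA.1).mp h.1
  · have hx : Sum.elim (-((A⁻¹ * B) *ᵥ y)) y ≠ 0 := by
      intro h0
      apply hy
      funext i
      exact congrFun h0 (Sum.inr i)
    have := h.dotProduct_mulVec_pos hx
    rw [dotProduct_mulVec, schur_complement_eq₁₁ B D _ _ hA.1] at this
    rw [dotProduct_mulVec]
    simpa using this

lemma posDef_schur₂₂ {A : Matrix m m ℝ} {B : Matrix m n ℝ} {D : Matrix n n ℝ}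
    (h : (fromBlocks A B Bᴴ D).PosDef) (hD : D.PosDef) :
    (A - B * D⁻¹ * Bᴴ).PosDef := by
  haveI : Invertible D := hD.isUnit.invertible
  refine Matrix.PosDef.of_dotProduct_mulVec_pos ?_ (fun y hy => ?_)
  · exact (Matrix.IsHermitian.fromBlocks₂₂ _ _ hD.1).mp h.1
  · have hx : Sum.elim y (-((D⁻¹ * Bᴴ) *ᵥ y)) ≠ 0 := by
      intro h0
      apply hy
      funext i
      exact congrFun h0 (Sum.inl i)
    have := h.dotProduct_mulVec_pos hx
    rw [dotProduct_mulVec, schur_complement_eq₂₂ A B _ _ hD.1] at this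
    rw [dotProduct_mulVec]
    simpa using this

lemma inv_toBlocks₂₂' {A : Matrix m m ℝ} {B : Matrix m n ℝ} {C : Matrix n m ℝ} {D : Matrix n n ℝ}
    [Invertible A] [Invertible (fromBlocks A B C D)] [Invertible (D - C * A⁻¹ * B)] :
    (fromBlocks A B C D)⁻¹.toBlocks₂₂ = (D - C * A⁻¹ * B)⁻¹ := by
  have e : D - C * ⅟A * B = D - C * A⁻¹ * B := by rw [invOf_eq_nonsing_inv]
  haveI : Invertible (D - C * ⅟A * B) := e ▸ inferInstance
  rw [← invOf_eq_nonsing_inv, invOf_fromBlocks₁₁_eq, toBlocks_fromBlocks₂₂,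
    invOf_eq_nonsing_inv, e]

lemma inv_toBlocks₁₁' {A : Matrix m m ℝ} {B : Matrix m n ℝ} {C : Matrix n m ℝ} {D : Matrix n n ℝ}
    [Invertible D] [Invertible (fromBlocks A B C D)] [Invertible (A - B * D⁻¹ * C)] :
    (fromBlocks A B C D)⁻¹.toBlocks₁₁ = (A - B * D⁻¹ * C)⁻¹ := by
  have e : A - B * ⅟D * C = A - B * D⁻¹ * C := by rw [invOf_eq_nonsing_inv]
  haveI : Invertible (A - B * ⅟D * C) := e ▸ inferInstance
  rw [← invOf_eq_nonsing_inv, invOf_fromBlocks₂₂_eq, toBlocks_fromBlocks₁₁,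
    invOf_eq_nonsing_inv, e]

lemma fromBlocks_sub' (A A' : Matrix m m ℝ) (B B' : Matrix m n ℝ) (C C' : Matrix n m ℝ)
    (D D' : Matrix n n ℝ) :
    fromBlocks A B C D - fromBlocks A' B' C' D' =
      fromBlocks (A - A') (B - B') (C - C') (D - D') := by
  ext i j
  rcases i with i | i <;> rcases j with j | j <;> simp [fromBlocks]

lemma smul_matrix_inv {c : ℝ} (hc : c ≠ 0) {M : Matrix n n ℝ} [Invertible M] :
    (c • M)⁻¹ = c⁻¹ • M⁻¹ := by
  apply inv_eq_right_inv
  rw [Matrix.smul_mul, Matrix.mul_smul, smul_smul, Matrix.mul_inv_of_invertible,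
    mul_inv_cancel₀ hc, one_smul]

section helper

variable {m n : Type*} [Fintype m] [Fintype n] [DecidableEq m] [DecidableEq n]

/-- Explicit inverse of a 2×2 block matrix via the Schur complement of the bottom-right block. -/
lemma fromBlocks_inv₂₂ (A : Matrix m m ℝ) (P : Matrix m n ℝ) (Q : Matrix n m ℝ)
    (S : Matrix n n ℝ) (W : Matrix m m ℝ) [Invertible S] [Invertible W]
    (hW : A = W + P * S⁻¹ * Q) :
    (fromBlocks A P Q S)⁻¹ =
      fromBlocks W⁻¹ (-(W⁻¹ * P * S⁻¹)) (-(S⁻¹ * Q * W⁻¹))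
        (S⁻¹ + S⁻¹ * Q * W⁻¹ * P * S⁻¹) := by
  apply inv_eq_right_inv
  rw [fromBlocks_multiply]
  have h11 : A * W⁻¹ + P * -(S⁻¹ * Q * W⁻¹) = 1 := by
    rw [hW]
    simp only [Matrix.mul_neg, Matrix.add_mul, Matrix.mul_assoc, Matrix.mul_inv_of_invertible]
    abel
  have h12 : A * -(W⁻¹ * P * S⁻¹) + P * (S⁻¹ + S⁻¹ * Q * W⁻¹ * P * S⁻¹) = 0 := by
    rw [hW]
    simp only [Matrix.mul_neg, Matrix.add_mul, Matrix.mul_add, Matrix.mul_assoc,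
      Matrix.mul_inv_cancel_left_of_invertible]
    abel
  have h21 : Q * W⁻¹ + S * -(S⁻¹ * Q * W⁻¹) = 0 := by
    simp only [Matrix.mul_neg, Matrix.mul_assoc, Matrix.mul_inv_cancel_left_of_invertible]
    abel
  have h22 : Q * -(W⁻¹ * P * S⁻¹) + S * (S⁻¹ + S⁻¹ * Q * W⁻¹ * P * S⁻¹) = 1 := by
    simp only [Matrix.mul_neg, Matrix.mul_add, Matrix.mul_assoc,
      Matrix.mul_inv_of_invertible, Matrix.mul_inv_cancel_left_of_invertible]
    abel
  rw [h11, h12, h21, h22]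
  exact fromBlocks_one

/-- Explicit inverse of a 2×2 block matrix via the Schur complement of the top-left block. -/
lemma fromBlocks_inv₁₁ (S : Matrix m m ℝ) (R : Matrix m n ℝ) (Q : Matrix n m ℝ)
    (B : Matrix n n ℝ) (W : Matrix n n ℝ) [Invertible S] [Invertible W]
    (hW : B = W + Q * S⁻¹ * R) :
    (fromBlocks S R Q B)⁻¹ =
      fromBlocks (S⁻¹ + S⁻¹ * R * W⁻¹ * Q * S⁻¹) (-(S⁻¹ * R * W⁻¹))
        (-(W⁻¹ * Q * S⁻¹)) W⁻¹ := by
  apply inv_eq_right_inv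
  rw [fromBlocks_multiply]
  have h11 : S * (S⁻¹ + S⁻¹ * R * W⁻¹ * Q * S⁻¹) + R * -(W⁻¹ * Q * S⁻¹) = 1 := by
    simp only [Matrix.mul_neg, Matrix.mul_add, Matrix.mul_assoc,
      Matrix.mul_inv_of_invertible, Matrix.mul_inv_cancel_left_of_invertible]
    abel
  have h12 : S * -(S⁻¹ * R * W⁻¹) + R * W⁻¹ = 0 := by
    simp only [Matrix.mul_neg, Matrix.mul_assoc, Matrix.mul_inv_cancel_left_of_invertible]
    abel
  have h21 : Q * (S⁻¹ + S⁻¹ * R * W⁻¹ * Q * S⁻¹) + B * -(W⁻¹ * Q * S⁻¹) = 0 := by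
    rw [hW]
    simp only [Matrix.mul_neg, Matrix.add_mul, Matrix.mul_add, Matrix.mul_assoc,
      Matrix.mul_inv_cancel_left_of_invertible]
    abel
  have h22 : Q * -(S⁻¹ * R * W⁻¹) + B * W⁻¹ = 1 := by
    rw [hW]
    simp only [Matrix.mul_neg, Matrix.add_mul, Matrix.mul_assoc,
      Matrix.mul_inv_of_invertible]
    abel
  rw [h11, h12, h21, h22]
  exact fromBlocks_one

end helper

section abstractMain

variable {ma ms mb : Type*} [Fintype ma] [Fintype ms] [Fintype mb]
  [DecidableEq ma] [DecidableEq ms] [DecidableEq mb]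

theorem abstract_main (A : Matrix ma ma ℝ) (P : Matrix ma ms ℝ) (S : Matrix ms ms ℝ)
    (R : Matrix ms mb ℝ) (B : Matrix mb mb ℝ)
    (h1 : (fromBlocks A P Pᴴ S).PosDef) (h2 : (fromBlocks S R Rᴴ B).PosDef)
    {α₁ α₂ α₃ μ : ℝ} (hα₁ : 0 < α₁) (hα₂ : 0 < α₂) (hμ : 0 < μ)
    (hα₃ : α₃ = α₁ + α₂ - μ)
    (M : Matrix (ma ⊕ (ms ⊕ mb)) (ma ⊕ (ms ⊕ mb)) ℝ)
    (hM : M = fromBlocks (α₁ • ((fromBlocks A P Pᴴ S)⁻¹).toBlocks₁₁)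
        (fromCols (α₁ • ((fromBlocks A P Pᴴ S)⁻¹).toBlocks₁₂) 0)
        (fromRows (α₁ • ((fromBlocks A P Pᴴ S)⁻¹).toBlocks₂₁) 0)
        (fromBlocks
          (α₁ • ((fromBlocks A P Pᴴ S)⁻¹).toBlocks₂₂ +
            α₂ • ((fromBlocks S R Rᴴ B)⁻¹).toBlocks₁₁ - α₃ • S⁻¹)
          (α₂ • ((fromBlocks S R Rᴴ B)⁻¹).toBlocks₁₂)
          (α₂ • ((fromBlocks S R Rᴴ B)⁻¹).toBlocks₂₁)
          (α₂ • ((fromBlocks S R Rᴴ B)⁻¹).toBlocks₂₂))) :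
    M.PosDef ∧ M⁻¹.toBlocks₂₂.toBlocks₁₁ = μ⁻¹ • S := by
  have hS : S.PosDef := by
    have := posDef_submatrix_inj h1 Sum.inr Sum.inr_injective
    rwa [show (fromBlocks A P Pᴴ S).submatrix Sum.inr Sum.inr = S from by ext i j; rfl] at this
  have hW₁ : (A - P * S⁻¹ * Pᴴ).PosDef := posDef_schur₂₂ h1 hS
  have hW₂ : (B - Rᴴ * S⁻¹ * R).PosDef := posDef_schur₁₁ h2 hS
  haveI : Invertible S := hS.isUnit.invertible
  haveI : Invertible (A - P * S⁻¹ * Pᴴ) := hW₁.isUnit.invertible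
  haveI : Invertible (B - Rᴴ * S⁻¹ * R) := hW₂.isUnit.invertible
  haveI : Invertible (α₁ : ℝ) := invertibleOfNonzero hα₁.ne'
  haveI : Invertible (α₂ : ℝ) := invertibleOfNonzero hα₂.ne'
  haveI : Invertible (μ : ℝ) := invertibleOfNonzero hμ.ne'
  have hG₁e := fromBlocks_inv₂₂ A P Pᴴ S (A - P * S⁻¹ * Pᴴ) (by abel)
  have hG₂e := fromBlocks_inv₁₁ S R Rᴴ B (B - Rᴴ * S⁻¹ * R) (by abel)
  rw [hG₁e, hG₂e] at hM
  simp only [toBlocks_fromBlocks₁₁, toBlocks_fromBlocks₁₂, toBlocks_fromBlocks₂₁,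
    toBlocks_fromBlocks₂₂] at hM
  -- names for the blocks
  have hUpd : ((A - P * S⁻¹ * Pᴴ)⁻¹).PosDef := hW₁.inv
  have hVpd : ((B - Rᴴ * S⁻¹ * R)⁻¹).PosDef := hW₂.inv
  have hApd : (α₁ • (A - P * S⁻¹ * Pᴴ)⁻¹).PosDef := posDef_smul hUpd hα₁
  have hDpd : (α₂ • (B - Rᴴ * S⁻¹ * R)⁻¹).PosDef := posDef_smul hVpd hα₂
  haveI : Invertible (α₁ • (A - P * S⁻¹ * Pᴴ)⁻¹) := hApd.isUnit.invertible
  haveI : Invertible (α₂ • (B - Rᴴ * S⁻¹ * R)⁻¹) := hDpd.isUnit.invertible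
  -- inverses of the scaled corners
  haveI : Invertible ((A - P * S⁻¹ * Pᴴ)⁻¹) := hUpd.isUnit.invertible
  haveI : Invertible ((B - Rᴴ * S⁻¹ * R)⁻¹) := hVpd.isUnit.invertible
  haveI : Invertible (S⁻¹) := hS.inv.isUnit.invertible
  have hAinv : (α₁ • (A - P * S⁻¹ * Pᴴ)⁻¹)⁻¹ = α₁⁻¹ • (A - P * S⁻¹ * Pᴴ) := by
    rw [smul_matrix_inv hα₁.ne', Matrix.inv_inv_of_invertible]
  have hDinv : (α₂ • (B - Rᴴ * S⁻¹ * R)⁻¹)⁻¹ = α₂⁻¹ • (B - Rᴴ * S⁻¹ * R) := by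
    rw [smul_matrix_inv hα₂.ne', Matrix.inv_inv_of_invertible]
  haveI : Invertible (A - P * (S⁻¹ * Pᴴ)) := by rw [← Matrix.mul_assoc]; infer_instance
  haveI : Invertible (B - Rᴴ * (S⁻¹ * R)) := by rw [← Matrix.mul_assoc]; infer_instance
  have hSt : S⁻¹ᵀ = S⁻¹ := by
    rw [← conjTranspose_eq_transpose_of_trivial]; exact hS.1.inv
  have hUt := hUpd.1
  simp only [Matrix.IsHermitian, conjTranspose_eq_transpose_of_trivial, Matrix.mul_assoc] at hUt
  have hVt := hVpd.1
  simp only [Matrix.IsHermitian, conjTranspose_eq_transpose_of_trivial, Matrix.mul_assoc] at hVt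
  -- conjugate-transpose identifications
  have hC' : (fromRows (α₁ • -(S⁻¹ * Pᴴ * (A - P * S⁻¹ * Pᴴ)⁻¹)) 0 : Matrix (ms ⊕ mb) ma ℝ)
      = (fromCols (α₁ • -((A - P * S⁻¹ * Pᴴ)⁻¹ * P * S⁻¹)) 0)ᴴ := by
    simp [transpose_fromCols, transpose_smul,
      transpose_neg, transpose_mul, hSt, hUt, Matrix.mul_assoc]
  have hDbs : (α₂ • -((B - Rᴴ * S⁻¹ * R)⁻¹ * Rᴴ * S⁻¹))
      = (α₂ • -(S⁻¹ * R * (B - Rᴴ * S⁻¹ * R)⁻¹))ᴴ := by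
    simp [transpose_smul, transpose_neg, transpose_mul, hSt, hVt, Matrix.mul_assoc]
  -- the outer Schur complement
  have hSO : (fromBlocks
        (α₁ • (S⁻¹ + S⁻¹ * Pᴴ * (A - P * S⁻¹ * Pᴴ)⁻¹ * P * S⁻¹) +
          α₂ • (S⁻¹ + S⁻¹ * R * (B - Rᴴ * S⁻¹ * R)⁻¹ * Rᴴ * S⁻¹) - α₃ • S⁻¹)
        (α₂ • -(S⁻¹ * R * (B - Rᴴ * S⁻¹ * R)⁻¹))
        (α₂ • -((B - Rᴴ * S⁻¹ * R)⁻¹ * Rᴴ * S⁻¹))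
        (α₂ • (B - Rᴴ * S⁻¹ * R)⁻¹)) -
      (fromRows (α₁ • -(S⁻¹ * Pᴴ * (A - P * S⁻¹ * Pᴴ)⁻¹)) 0) *
        (α₁ • (A - P * S⁻¹ * Pᴴ)⁻¹)⁻¹ *
        (fromCols (α₁ • -((A - P * S⁻¹ * Pᴴ)⁻¹ * P * S⁻¹)) 0) =
      fromBlocks
        (μ • S⁻¹ + α₂ • (S⁻¹ * R * (B - Rᴴ * S⁻¹ * R)⁻¹ * Rᴴ * S⁻¹))
        (α₂ • -(S⁻¹ * R * (B - Rᴴ * S⁻¹ * R)⁻¹))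
        (α₂ • -((B - Rᴴ * S⁻¹ * R)⁻¹ * Rᴴ * S⁻¹))
        (α₂ • (B - Rᴴ * S⁻¹ * R)⁻¹) := by
    rw [hAinv, fromRows_mul, fromRows_mul_fromCols]
    simp only [Matrix.zero_mul, Matrix.mul_zero]
    rw [fromBlocks_sub']
    simp only [sub_zero]
    rw [fromBlocks_inj]
    refine ⟨?_, rfl, rfl, rfl⟩
    have hprod : (α₁ • -(S⁻¹ * Pᴴ * (A - P * S⁻¹ * Pᴴ)⁻¹)) * (α₁⁻¹ • (A - P * S⁻¹ * Pᴴ)) *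
        (α₁ • -((A - P * S⁻¹ * Pᴴ)⁻¹ * P * S⁻¹)) =
        α₁ • (S⁻¹ * (Pᴴ * ((A - P * S⁻¹ * Pᴴ)⁻¹ * (P * S⁻¹)))) := by
      simp only [Matrix.smul_mul, Matrix.mul_smul, Matrix.neg_mul, Matrix.mul_neg, smul_neg,
        neg_neg, smul_smul, Matrix.mul_assoc, Matrix.mul_inv_cancel_left_of_invertible,
        Matrix.inv_mul_cancel_left_of_invertible]
      rw [show α₁ * (α₁⁻¹ * α₁) = α₁ by field_simp]
    rw [hprod, hα₃]
    simp only [smul_add, sub_smul, add_smul, smul_smul, Matrix.mul_assoc]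
    abel
  -- the inner Schur complement
  have hSI : (μ • S⁻¹ + α₂ • (S⁻¹ * R * (B - Rᴴ * S⁻¹ * R)⁻¹ * Rᴴ * S⁻¹)) -
      (α₂ • -(S⁻¹ * R * (B - Rᴴ * S⁻¹ * R)⁻¹)) * (α₂ • (B - Rᴴ * S⁻¹ * R)⁻¹)⁻¹ *
        (α₂ • -((B - Rᴴ * S⁻¹ * R)⁻¹ * Rᴴ * S⁻¹)) = μ • S⁻¹ := by
    rw [hDinv]
    have hprod : (α₂ • -(S⁻¹ * R * (B - Rᴴ * S⁻¹ * R)⁻¹)) * (α₂⁻¹ • (B - Rᴴ * S⁻¹ * R)) *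
        (α₂ • -((B - Rᴴ * S⁻¹ * R)⁻¹ * Rᴴ * S⁻¹)) =
        α₂ • (S⁻¹ * (R * ((B - Rᴴ * S⁻¹ * R)⁻¹ * (Rᴴ * S⁻¹)))) := by
      simp only [Matrix.smul_mul, Matrix.mul_smul, Matrix.neg_mul, Matrix.mul_neg, smul_neg,
        neg_neg, smul_smul, Matrix.mul_assoc, Matrix.mul_inv_cancel_left_of_invertible,
        Matrix.inv_mul_cancel_left_of_invertible]
      rw [show α₂ * (α₂⁻¹ * α₂) = α₂ by field_simp]
    rw [hprod]
    simp only [Matrix.mul_assoc]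
    abel
  -- positive definiteness of the inner Schur complement
  have hmuS : (μ • S⁻¹).PosDef := posDef_smul hS.inv hμ
  -- positive definiteness of the outer Schur complement
  have hSOpd : (fromBlocks
        (μ • S⁻¹ + α₂ • (S⁻¹ * R * (B - Rᴴ * S⁻¹ * R)⁻¹ * Rᴴ * S⁻¹))
        (α₂ • -(S⁻¹ * R * (B - Rᴴ * S⁻¹ * R)⁻¹))
        (α₂ • -((B - Rᴴ * S⁻¹ * R)⁻¹ * Rᴴ * S⁻¹))
        (α₂ • (B - Rᴴ * S⁻¹ * R)⁻¹)).PosDef := by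
    rw [hDbs]
    apply posDef_fromBlocks₂₂ hDpd
    rw [← hDbs]
    rw [hSI]
    exact hmuS
  -- positive definiteness of M
  have hMpd : M.PosDef := by
    rw [hM, hC']
    apply posDef_fromBlocks₁₁ hApd
    rw [← hC', hSO]
    exact hSOpd
  refine ⟨hMpd, ?_⟩
  -- now compute the block of the inverse
  haveI hMinvertible : Invertible M := hMpd.isUnit.invertible
  rw [hM] at hMinvertible
  haveI : Invertible (fromBlocks
        (α₁ • (S⁻¹ + S⁻¹ * Pᴴ * (A - P * S⁻¹ * Pᴴ)⁻¹ * P * S⁻¹) +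
          α₂ • (S⁻¹ + S⁻¹ * R * (B - Rᴴ * S⁻¹ * R)⁻¹ * Rᴴ * S⁻¹) - α₃ • S⁻¹)
        (α₂ • -(S⁻¹ * R * (B - Rᴴ * S⁻¹ * R)⁻¹))
        (α₂ • -((B - Rᴴ * S⁻¹ * R)⁻¹ * Rᴴ * S⁻¹))
        (α₂ • (B - Rᴴ * S⁻¹ * R)⁻¹) -
      (fromRows (α₁ • -(S⁻¹ * Pᴴ * (A - P * S⁻¹ * Pᴴ)⁻¹)) 0) *
        (α₁ • (A - P * S⁻¹ * Pᴴ)⁻¹)⁻¹ *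
        (fromCols (α₁ • -((A - P * S⁻¹ * Pᴴ)⁻¹ * P * S⁻¹)) 0)) := by
    rw [hSO]; exact hSOpd.isUnit.invertible
  have h22 : M⁻¹.toBlocks₂₂ = (fromBlocks
        (μ • S⁻¹ + α₂ • (S⁻¹ * R * (B - Rᴴ * S⁻¹ * R)⁻¹ * Rᴴ * S⁻¹))
        (α₂ • -(S⁻¹ * R * (B - Rᴴ * S⁻¹ * R)⁻¹))
        (α₂ • -((B - Rᴴ * S⁻¹ * R)⁻¹ * Rᴴ * S⁻¹))
        (α₂ • (B - Rᴴ * S⁻¹ * R)⁻¹))⁻¹ := by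
    rw [hM, inv_toBlocks₂₂', hSO]
  haveI : Invertible ((μ • S⁻¹ + α₂ • (S⁻¹ * R * (B - Rᴴ * S⁻¹ * R)⁻¹ * Rᴴ * S⁻¹)) -
      (α₂ • -(S⁻¹ * R * (B - Rᴴ * S⁻¹ * R)⁻¹)) * (α₂ • (B - Rᴴ * S⁻¹ * R)⁻¹)⁻¹ *
        (α₂ • -((B - Rᴴ * S⁻¹ * R)⁻¹ * Rᴴ * S⁻¹))) := by
    rw [hSI]; exact hmuS.isUnit.invertible
  haveI : Invertible (fromBlocks
        (μ • S⁻¹ + α₂ • (S⁻¹ * R * (B - Rᴴ * S⁻¹ * R)⁻¹ * Rᴴ * S⁻¹))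
        (α₂ • -(S⁻¹ * R * (B - Rᴴ * S⁻¹ * R)⁻¹))
        (α₂ • -((B - Rᴴ * S⁻¹ * R)⁻¹ * Rᴴ * S⁻¹))
        (α₂ • (B - Rᴴ * S⁻¹ * R)⁻¹)) := hSOpd.isUnit.invertible
  rw [h22, inv_toBlocks₁₁', hSI, smul_matrix_inv hμ.ne', Matrix.inv_inv_of_invertible]

end abstractMain

/-- In the two-clique decomposable model with cliques `C₁ = a ∪ s`, `C₂ = s ∪ b` (all of
`a`, `s`, `b` nonempty) and `n > p + 1`, the MVUE
`M = [(n−c₁−1) T_{C₁}⁻¹]⁰ + [(n−c₂−1) T_{C₂}⁻¹]⁰ − [(n−|s|−1) T_s⁻¹]⁰`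
is symmetric positive definite and `(M⁻¹)_s = (1/(n−p−1)) T_s`. -/
theorem mvue_posDef_and_separator_block
    {p : ℕ} (a s b : Finset (Fin p))
    (hab : Disjoint a b) (has : Disjoint a s) (hsb : Disjoint s b)
    (hcover : a ∪ s ∪ b = Finset.univ)
    (ha : a.Nonempty) (hs : s.Nonempty) (hb : b.Nonempty)
    (T : Matrix (Fin p) (Fin p) ℝ) (hT : T.PosDef)
    (n : ℕ) (hn : p + 1 < n) :
    (fill0 (a ∪ s) (((n : ℝ) - (a ∪ s).card - 1) • (subm T (a ∪ s))⁻¹) +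
        fill0 (s ∪ b) (((n : ℝ) - (s ∪ b).card - 1) • (subm T (s ∪ b))⁻¹) -
        fill0 s (((n : ℝ) - s.card - 1) • (subm T s)⁻¹)).PosDef ∧
      subm (fill0 (a ∪ s) (((n : ℝ) - (a ∪ s).card - 1) • (subm T (a ∪ s))⁻¹) +
          fill0 (s ∪ b) (((n : ℝ) - (s ∪ b).card - 1) • (subm T (s ∪ b))⁻¹) -
          fill0 s (((n : ℝ) - s.card - 1) • (subm T s)⁻¹))⁻¹ s =
        (1 / ((n : ℝ) - p - 1)) • subm T s := by
  classical
  -- membership facts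
  have hmem_a_C1 : ∀ x : a, (x : Fin p) ∈ a ∪ s := fun x => Finset.mem_union_left _ x.2
  have hmem_s_C1 : ∀ x : s, (x : Fin p) ∈ a ∪ s := fun x => Finset.mem_union_right _ x.2
  have hmem_s_C2 : ∀ x : s, (x : Fin p) ∈ s ∪ b := fun x => Finset.mem_union_left _ x.2
  have hmem_b_C2 : ∀ x : b, (x : Fin p) ∈ s ∪ b := fun x => Finset.mem_union_right _ x.2
  have hnot_a_s : ∀ x : a, (x : Fin p) ∉ s := fun x => Finset.disjoint_left.mp has x.2
  have hnot_a_C2 : ∀ x : a, (x : Fin p) ∉ s ∪ b := by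
    intro x hx
    rcases Finset.mem_union.mp hx with h | h
    · exact Finset.disjoint_left.mp has x.2 h
    · exact Finset.disjoint_left.mp hab x.2 h
  have hnot_b_s : ∀ x : b, (x : Fin p) ∉ s := fun x hx =>
    Finset.disjoint_left.mp hsb hx x.2
  have hnot_b_C1 : ∀ x : b, (x : Fin p) ∉ a ∪ s := by
    intro x hx
    rcases Finset.mem_union.mp hx with h | h
    · exact Finset.disjoint_left.mp hab h x.2
    · exact Finset.disjoint_left.mp hsb h x.2
  -- the global equivalence
  have hf : Function.Bijective
      (Sum.elim (fun x : a => (x : Fin p))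
        (Sum.elim (fun x : s => (x : Fin p)) (fun x : b => (x : Fin p)))) := by
    constructor
    · rintro (x | x | x) (y | y | y) h <;> simp only [Sum.elim_inl, Sum.elim_inr] at h
      · exact congrArg Sum.inl (Subtype.ext h)
      · exact absurd (h ▸ y.2) (hnot_a_s x)
      · exact absurd (h ▸ y.2) (fun h' => Finset.disjoint_left.mp hab x.2 h')
      · exact absurd (h ▸ y.2) (fun h' => Finset.disjoint_left.mp has h' x.2)
      · exact congrArg (Sum.inr ∘ Sum.inl) (Subtype.ext h)
      · exact absurd (h ▸ y.2) (fun h' => Finset.disjoint_left.mp hsb x.2 h')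
      · exact absurd (h ▸ y.2) (fun h' => Finset.disjoint_left.mp hab h' x.2)
      · exact absurd (h ▸ y.2) (fun h' => Finset.disjoint_left.mp hsb h' x.2)
      · exact congrArg (Sum.inr ∘ Sum.inr) (Subtype.ext h)
    · intro i
      have hi : i ∈ a ∪ s ∪ b := hcover ▸ Finset.mem_univ i
      rcases Finset.mem_union.mp hi with h' | h'
      · rcases Finset.mem_union.mp h' with h'' | h''
        · exact ⟨Sum.inl ⟨i, h''⟩, rfl⟩
        · exact ⟨Sum.inr (Sum.inl ⟨i, h''⟩), rfl⟩
      · exact ⟨Sum.inr (Sum.inr ⟨i, h'⟩), rfl⟩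
  set e := Equiv.ofBijective _ hf with he
  -- the two clique equivalences
  have hf1 : Function.Bijective
      (Sum.elim (fun x : a => (⟨x, hmem_a_C1 x⟩ : (a ∪ s : Finset (Fin p))))
        (fun x : s => (⟨x, hmem_s_C1 x⟩ : (a ∪ s : Finset (Fin p))))) := by
    constructor
    · rintro (x | x) (y | y) h <;>
        simp only [Sum.elim_inl, Sum.elim_inr, Subtype.mk.injEq] at h
      · exact congrArg Sum.inl (Subtype.ext h)
      · exact absurd (h ▸ y.2) (hnot_a_s x)
      · exact absurd (h ▸ y.2) (fun h' => Finset.disjoint_left.mp has h' x.2)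
      · exact congrArg Sum.inr (Subtype.ext h)
    · rintro ⟨i, hi⟩
      rcases Finset.mem_union.mp hi with h' | h'
      · exact ⟨Sum.inl ⟨i, h'⟩, rfl⟩
      · exact ⟨Sum.inr ⟨i, h'⟩, rfl⟩
  have hf2 : Function.Bijective
      (Sum.elim (fun x : s => (⟨x, hmem_s_C2 x⟩ : (s ∪ b : Finset (Fin p))))
        (fun x : b => (⟨x, hmem_b_C2 x⟩ : (s ∪ b : Finset (Fin p))))) := by
    constructor
    · rintro (x | x) (y | y) h <;>
        simp only [Sum.elim_inl, Sum.elim_inr, Subtype.mk.injEq] at h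
      · exact congrArg Sum.inl (Subtype.ext h)
      · exact absurd (h ▸ y.2) (fun h' => Finset.disjoint_left.mp hsb x.2 h')
      · exact absurd (h ▸ y.2) (fun h' => Finset.disjoint_left.mp hsb h' x.2)
      · exact congrArg Sum.inr (Subtype.ext h)
    · rintro ⟨i, hi⟩
      rcases Finset.mem_union.mp hi with h' | h'
      · exact ⟨Sum.inl ⟨i, h'⟩, rfl⟩
      · exact ⟨Sum.inr ⟨i, h'⟩, rfl⟩
  set e₁ := Equiv.ofBijective _ hf1 with he₁
  set e₂ := Equiv.ofBijective _ hf2 with he₂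
  -- symmetry of T
  have hTsymm : ∀ i j : Fin p, T j i = T i j := by
    intro i j
    conv_lhs => rw [← hT.1]
    rfl
  -- the blocks
  set A : Matrix a a ℝ := T.submatrix (fun i => (i : Fin p)) (fun j => (j : Fin p)) with hA
  set P : Matrix a s ℝ := T.submatrix (fun i => (i : Fin p)) (fun j => (j : Fin p)) with hP
  set S : Matrix s s ℝ := subm T s with hS
  set R : Matrix s b ℝ := T.submatrix (fun i => (i : Fin p)) (fun j => (j : Fin p)) with hR
  set B : Matrix b b ℝ := T.submatrix (fun i => (i : Fin p)) (fun j => (j : Fin p)) with hB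
  -- the clique matrices are the reindexed principal submatrices
  have hsub1 : (subm T (a ∪ s)).submatrix e₁ e₁ = fromBlocks A P Pᴴ S := by
    ext u v
    rcases u with x | x <;> rcases v with y | y <;>
      simp [he₁, subm, fromBlocks, hA, hP, hS, Equiv.ofBijective, conjTranspose_apply,
        hTsymm, Matrix.submatrix_apply]
  have hsub2 : (subm T (s ∪ b)).submatrix e₂ e₂ = fromBlocks S R Rᴴ B := by
    ext u v
    rcases u with x | x <;> rcases v with y | y <;>
      simp [he₂, subm, fromBlocks, hS, hR, hB, Equiv.ofBijective, conjTranspose_apply,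
        hTsymm]
  -- positive definiteness of the clique matrices
  have h1 : (fromBlocks A P Pᴴ S).PosDef := by
    rw [← hsub1]
    exact posDef_submatrix_inj (posDef_submatrix_inj hT _ Subtype.coe_injective) e₁ e₁.injective
  have h2 : (fromBlocks S R Rᴴ B).PosDef := by
    rw [← hsub2]
    exact posDef_submatrix_inj (posDef_submatrix_inj hT _ Subtype.coe_injective) e₂ e₂.injective
  -- inverse transfer
  have hinv1 : ∀ u v, (subm T (a ∪ s))⁻¹ (e₁ u) (e₁ v) = (fromBlocks A P Pᴴ S)⁻¹ u v := by
    intro u v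
    rw [← hsub1, Matrix.inv_submatrix_equiv]
    rfl
  have hinv2 : ∀ u v, (subm T (s ∪ b))⁻¹ (e₂ u) (e₂ v) = (fromBlocks S R Rᴴ B)⁻¹ u v := by
    intro u v
    rw [← hsub2, Matrix.inv_submatrix_equiv]
    rfl
  -- scalar facts
  have hcardab : (a ∪ s).card = a.card + s.card := Finset.card_union_of_disjoint has
  have hcardsb : (s ∪ b).card = s.card + b.card := Finset.card_union_of_disjoint hsb
  have hcardp : a.card + s.card + b.card = p := by
    have h1' : (a ∪ s ∪ b).card = p := by rw [hcover]; simp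
    have h2' : Disjoint (a ∪ s) b := Finset.disjoint_union_left.mpr ⟨hab, hsb⟩
    rw [Finset.card_union_of_disjoint h2', hcardab] at h1'
    exact h1'
  have hbpos : 1 ≤ b.card := Finset.card_pos.mpr hb
  have hapos : 1 ≤ a.card := Finset.card_pos.mpr ha
  have hnR : (p : ℝ) + 2 ≤ n := by exact_mod_cast hn
  have hpR : (p : ℝ) = a.card + s.card + b.card := by exact_mod_cast hcardp.symm
  have hμ : (0:ℝ) < (n : ℝ) - p - 1 := by linarith
  have hα₁ : (0:ℝ) < (n : ℝ) - (a ∪ s).card - 1 := by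
    have : ((a ∪ s).card : ℝ) = a.card + s.card := by exact_mod_cast hcardab
    have hb' : (1:ℝ) ≤ b.card := by exact_mod_cast hbpos
    rw [this]
    linarith [hpR]
  have hα₂ : (0:ℝ) < (n : ℝ) - (s ∪ b).card - 1 := by
    have : ((s ∪ b).card : ℝ) = s.card + b.card := by exact_mod_cast hcardsb
    have ha' : (1:ℝ) ≤ a.card := by exact_mod_cast hapos
    rw [this]
    linarith [hpR]
  have hα₃ : ((n : ℝ) - s.card - 1) =
      ((n : ℝ) - (a ∪ s).card - 1) + ((n : ℝ) - (s ∪ b).card - 1) - ((n : ℝ) - p - 1) := by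
    have h1' : ((a ∪ s).card : ℝ) = a.card + s.card := by exact_mod_cast hcardab
    have h2' : ((s ∪ b).card : ℝ) = s.card + b.card := by exact_mod_cast hcardsb
    rw [h1', h2']
    linarith [hpR]
  -- fill0 entry lemmas
  have hfill_pos : ∀ (c : Finset (Fin p)) (M : Matrix c c ℝ) (i j : Fin p)
      (hi : i ∈ c) (hj : j ∈ c), fill0 c M i j = M ⟨i, hi⟩ ⟨j, hj⟩ := by
    intro c M i j hi hj
    simp [fill0, dif_pos hi, dif_pos hj]
  have hfill_negL : ∀ (c : Finset (Fin p)) (M : Matrix c c ℝ) (i j : Fin p),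
      i ∉ c → fill0 c M i j = 0 := by
    intro c M i j hi
    simp [fill0, dif_neg hi]
  have hfill_negR : ∀ (c : Finset (Fin p)) (M : Matrix c c ℝ) (i j : Fin p),
      j ∉ c → fill0 c M i j = 0 := by
    intro c M i j hj
    simp [fill0, hj]
  set c₁ : ℝ := (n : ℝ) - (a ∪ s).card - 1 with hc₁
  set c₂ : ℝ := (n : ℝ) - (s ∪ b).card - 1 with hc₂
  set c₃ : ℝ := (n : ℝ) - s.card - 1 with hc₃
  set F := fill0 (a ∪ s) (c₁ • (subm T (a ∪ s))⁻¹) +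
      fill0 (s ∪ b) (c₂ • (subm T (s ∪ b))⁻¹) - fill0 s (c₃ • S⁻¹) with hF
  have hFsub : F.submatrix ⇑e ⇑e = fromBlocks
      (c₁ • ((fromBlocks A P Pᴴ S)⁻¹).toBlocks₁₁)
      (fromCols (c₁ • ((fromBlocks A P Pᴴ S)⁻¹).toBlocks₁₂) 0)
      (fromRows (c₁ • ((fromBlocks A P Pᴴ S)⁻¹).toBlocks₂₁) 0)
      (fromBlocks
        (c₁ • ((fromBlocks A P Pᴴ S)⁻¹).toBlocks₂₂ +
          c₂ • ((fromBlocks S R Rᴴ B)⁻¹).toBlocks₁₁ - c₃ • S⁻¹)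
        (c₂ • ((fromBlocks S R Rᴴ B)⁻¹).toBlocks₁₂)
        (c₂ • ((fromBlocks S R Rᴴ B)⁻¹).toBlocks₂₁)
        (c₂ • ((fromBlocks S R Rᴴ B)⁻¹).toBlocks₂₂)) := by
    have he_a : ∀ x : a, e (Sum.inl x) = (x : Fin p) := fun _ => rfl
    have he_s : ∀ x : s, e (Sum.inr (Sum.inl x)) = (x : Fin p) := fun _ => rfl
    have he_b : ∀ x : b, e (Sum.inr (Sum.inr x)) = (x : Fin p) := fun _ => rfl
    ext u v
    rcases u with x | x | x <;> rcases v with y | y | y <;>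
      rw [Matrix.submatrix_apply, hF] <;>
      simp only [Matrix.add_apply, Matrix.sub_apply, he_a, he_s, he_b]
    · -- (a, a)
      rw [hfill_pos _ _ _ _ (hmem_a_C1 x) (hmem_a_C1 y),
        hfill_negL _ _ _ _ (hnot_a_C2 x), hfill_negL _ _ _ _ (hnot_a_s x)]
      show (c₁ • (subm T (a ∪ s))⁻¹) _ _ + 0 - 0 =
        (c₁ • ((fromBlocks A P Pᴴ S)⁻¹).toBlocks₁₁) x y
      simp only [Matrix.smul_apply, smul_eq_mul, add_zero, sub_zero]
      exact congrArg _ (hinv1 (Sum.inl x) (Sum.inl y))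
    · -- (a, s)
      rw [hfill_pos _ _ _ _ (hmem_a_C1 x) (hmem_s_C1 y),
        hfill_negL _ _ _ _ (hnot_a_C2 x), hfill_negL _ _ _ _ (hnot_a_s x)]
      show (c₁ • (subm T (a ∪ s))⁻¹) _ _ + 0 - 0 =
        (c₁ • ((fromBlocks A P Pᴴ S)⁻¹).toBlocks₁₂) x y
      simp only [Matrix.smul_apply, smul_eq_mul, add_zero, sub_zero]
      exact congrArg _ (hinv1 (Sum.inl x) (Sum.inr y))
    · -- (a, b)
      rw [hfill_negR _ _ _ _ (hnot_b_C1 y),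
        hfill_negL _ _ _ _ (hnot_a_C2 x), hfill_negL _ _ _ _ (hnot_a_s x)]
      show (0:ℝ) + 0 - 0 = (0 : Matrix a b ℝ) x y
      simp
    · -- (s, a)
      rw [hfill_pos _ _ _ _ (hmem_s_C1 x) (hmem_a_C1 y),
        hfill_negR _ _ _ _ (hnot_a_C2 y), hfill_negR _ _ _ _ (hnot_a_s y)]
      show (c₁ • (subm T (a ∪ s))⁻¹) _ _ + 0 - 0 =
        (c₁ • ((fromBlocks A P Pᴴ S)⁻¹).toBlocks₂₁) x y
      simp only [Matrix.smul_apply, smul_eq_mul, add_zero, sub_zero]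
      exact congrArg _ (hinv1 (Sum.inr x) (Sum.inl y))
    · -- (s, s)
      rw [hfill_pos _ _ _ _ (hmem_s_C1 x) (hmem_s_C1 y),
        hfill_pos _ _ _ _ (hmem_s_C2 x) (hmem_s_C2 y),
        hfill_pos _ _ _ _ x.2 y.2]
      show (c₁ • (subm T (a ∪ s))⁻¹) _ _ + (c₂ • (subm T (s ∪ b))⁻¹) _ _ -
          (c₃ • S⁻¹) _ _ =
        (c₁ • ((fromBlocks A P Pᴴ S)⁻¹).toBlocks₂₂ +
          c₂ • ((fromBlocks S R Rᴴ B)⁻¹).toBlocks₁₁ - c₃ • S⁻¹) x y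
      simp only [Matrix.smul_apply, Matrix.add_apply, Matrix.sub_apply, smul_eq_mul]
      exact congrArg₂ (fun u v => c₁ * u + c₂ * v - c₃ * S⁻¹ x y)
        (hinv1 (Sum.inr x) (Sum.inr y)) (hinv2 (Sum.inl x) (Sum.inl y))
    · -- (s, b)
      rw [hfill_negR _ _ _ _ (hnot_b_C1 y),
        hfill_pos _ _ _ _ (hmem_s_C2 x) (hmem_b_C2 y),
        hfill_negR _ _ _ _ (hnot_b_s y)]
      show (0:ℝ) + (c₂ • (subm T (s ∪ b))⁻¹) _ _ - 0 =
        (c₂ • ((fromBlocks S R Rᴴ B)⁻¹).toBlocks₁₂) x y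
      simp only [Matrix.smul_apply, smul_eq_mul, zero_add, sub_zero]
      exact congrArg _ (hinv2 (Sum.inl x) (Sum.inr y))
    · -- (b, a)
      rw [hfill_negL _ _ _ _ (hnot_b_C1 x),
        hfill_negR _ _ _ _ (hnot_a_C2 y), hfill_negR _ _ _ _ (hnot_a_s y)]
      show (0:ℝ) + 0 - 0 = (0 : Matrix b a ℝ) x y
      simp
    · -- (b, s)
      rw [hfill_negL _ _ _ _ (hnot_b_C1 x),
        hfill_pos _ _ _ _ (hmem_b_C2 x) (hmem_s_C2 y),
        hfill_negL _ _ _ _ (hnot_b_s x)]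
      show (0:ℝ) + (c₂ • (subm T (s ∪ b))⁻¹) _ _ - 0 =
        (c₂ • ((fromBlocks S R Rᴴ B)⁻¹).toBlocks₂₁) x y
      simp only [Matrix.smul_apply, smul_eq_mul, zero_add, sub_zero]
      exact congrArg _ (hinv2 (Sum.inr x) (Sum.inl y))
    · -- (b, b)
      rw [hfill_negL _ _ _ _ (hnot_b_C1 x),
        hfill_pos _ _ _ _ (hmem_b_C2 x) (hmem_b_C2 y),
        hfill_negL _ _ _ _ (hnot_b_s x)]
      show (0:ℝ) + (c₂ • (subm T (s ∪ b))⁻¹) _ _ - 0 =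
        (c₂ • ((fromBlocks S R Rᴴ B)⁻¹).toBlocks₂₂) x y
      simp only [Matrix.smul_apply, smul_eq_mul, zero_add, sub_zero]
      exact congrArg _ (hinv2 (Sum.inr x) (Sum.inr y))
  -- apply the abstract theorem
  obtain ⟨hMpd, hMinv⟩ := abstract_main A P S R B h1 h2 hα₁ hα₂ hμ hα₃
    (F.submatrix ⇑e ⇑e) hFsub
  constructor
  · exact (posDef_submatrix_equiv e).mp hMpd
  · ext i j
    have hentry : (F.submatrix ⇑e ⇑e)⁻¹ (Sum.inr (Sum.inl i)) (Sum.inr (Sum.inl j)) =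
        ((n : ℝ) - p - 1)⁻¹ * S i j := by
      have := congrFun (congrFun hMinv i) j
      simpa [Matrix.toBlocks₂₂, Matrix.toBlocks₁₁, Matrix.smul_apply, smul_eq_mul] using this
    rw [Matrix.inv_submatrix_equiv] at hentry
    have : subm F⁻¹ s i j = F⁻¹ (e (Sum.inr (Sum.inl i))) (e (Sum.inr (Sum.inl j))) := rfl
    rw [this]
    rw [show F⁻¹ (e (Sum.inr (Sum.inl i))) (e (Sum.inr (Sum.inl j))) =
      ((n : ℝ) - p - 1)⁻¹ * S i j from hentry]
    simp [Matrix.smul_apply, smul_eq_mul, one_div]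
end
end
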